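/- arXiv:1810.03119 — 9 statements merged into one kernel-verified Lean document; each statement's English description precedes it below -/
import Mathlib

section
/- Let G be a chordal graph on n vertices which has a maximal clique with t+1 vertices for some t ≥ 1. Then c(G) ≤ n − t. -/
/-- `G` has an induced cycle of length `n`, i.e. an injective map from `ZMod n` to the
vertices such that images are adjacent exactly when the indices are consecutive. -/
def SimpleGraph.HasInducedCycle {V : Type*} (G : SimpleGraph V) (n : ℕ) : Prop :=
  ∃ f : ZMod n → V, Function.Injective f ∧
    ∀ i j : ZMod n, G.Adj (f i) (f j) ↔ (j = i + 1 ∨ i = j + 1)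

/-- A graph is chordal if it has no induced cycle of length greater than 3. -/
def SimpleGraph.Chordal {V : Type*} (G : SimpleGraph V) : Prop :=
  ∀ n : ℕ, 4 ≤ n → ¬ G.HasInducedCycle n

/-- `c(G)`: the number of maximal cliques of a graph `G`. -/
noncomputable def numMaximalCliques {V : Type*} (G : SimpleGraph V) : ℕ :=
  {s : Set V | Maximal (fun t => G.IsClique t) s}.ncard

/-!
A finite chordal graph has a simplicial vertex `v` (Dirac), and the only maximal clique
containing `v` is its closed neighbourhood `N[v]`. Deleting `v` keeps the graph chordal and
loses at most this clique; it is lost only when `N(v)` is no longer maximal in `G - v`, and then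
`G - v` has a maximal clique at least as large as `N[v]`. Induction on the number of vertices
gives `c(G) + |F| ≤ n + 1` for every maximal clique `F`.
-/

lemma ZMod.eq_add_one_or_eq_add_one_iff_of_val_lt {n : ℕ} [Fact (1 < n)] {i j : ZMod n}
    (h : i.val < j.val) :
    (j = i + 1 ∨ i = j + 1) ↔ (j.val = i.val + 1 ∨ (i.val = 0 ∧ j.val + 1 = n)) := by
  have hj := j.val_lt
  simp only [← (ZMod.val_injective n).eq_iff, ZMod.val_add, ZMod.val_one]
  rcases (Nat.lt_or_ge (i.val + 1) n) with hi | hi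
  · rw [Nat.mod_eq_of_lt hi]
    rcases (Nat.lt_or_ge (j.val + 1) n) with hj' | hj'
    · rw [Nat.mod_eq_of_lt hj']; omega
    · rw [show j.val + 1 = n by omega, Nat.mod_self]; omega
  · omega

namespace SimpleGraph

variable {V : Type*} {G : SimpleGraph V}

namespace Walk

def IsInducedPath {u v : V} (p : G.Walk u v) : Prop :=
  p.IsPath ∧ ∀ i j, i + 1 < j → j ≤ p.length → ¬ G.Adj (p.getVert i) (p.getVert j)

variable {x y : V}

lemma IsInducedPath.getVert_ne {p : G.Walk x y} (hp : p.IsInducedPath) {i j : ℕ} (hij : i < j)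
    (hj : j ≤ p.length) : p.getVert i ≠ p.getVert j := fun h =>
  hij.ne (hp.1.getVert_injOn (by simp only [Set.mem_ofPred_eq]; omega) hj h)

lemma IsInducedPath.eq_add_one_of_adj {p : G.Walk x y} (hp : p.IsInducedPath) {i j : ℕ}
    (hij : i < j) (hj : j ≤ p.length) (h : G.Adj (p.getVert i) (p.getVert j)) : j = i + 1 := by
  by_contra hne
  exact hp.2 i j (by omega) hj h

lemma two_le_length_of_not_adj (p : G.Walk x y) (hne : x ≠ y) (h : ¬ G.Adj x y) :
    2 ≤ p.length := by
  by_contra! hlt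
  interval_cases hp : p.length
  · exact hne (eq_of_length_eq_zero hp)
  · exact h (adj_of_length_eq_one hp)

/-- A shortest path inside `Q` has no chords: a chord would shortcut it. -/
theorem exists_isInducedPath_of_support_subset {Q : Set V} (p₀ : G.Walk x y)
    (h₀ : ∀ v ∈ p₀.support, v ∈ Q) :
    ∃ p : G.Walk x y, p.IsInducedPath ∧ ∀ v ∈ p.support, v ∈ Q := by
  classical
  obtain ⟨p, ⟨hpath, hpQ⟩, hmin⟩ := (measure fun p : G.Walk x y => p.length).wf.has_min
    {p | p.IsPath ∧ ∀ v ∈ p.support, v ∈ Q}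
    ⟨p₀.bypass, p₀.bypass_isPath,
      fun v hv => h₀ v (p₀.support_bypass_subset_support hv)⟩
  refine ⟨p, ⟨hpath, fun i j hij hj hadj => ?_⟩, hpQ⟩
  let r := (p.take i).append (cons hadj (p.drop j))
  have hrQ : ∀ v ∈ r.support, v ∈ Q := by
    intro v hv
    rcases (mem_support_append_iff _ _).1 hv with hv | hv
    · exact hpQ v ((p.isSubwalk_take i).support_subset hv)
    · rcases List.mem_cons.1 hv with rfl | hv
      · exact hpQ _ (p.getVert_mem_support i)
      · exact hpQ v ((p.isSubwalk_drop j).support_subset hv)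
  have hr : r.length < p.length := by
    simp only [r, length_append, length_cons, take_length, drop_length]
    omega
  exact hmin r.bypass ⟨r.bypass_isPath, fun v hv => hrQ v (r.support_bypass_subset_support hv)⟩
    (r.length_bypass_le_length.trans_lt hr)

end Walk

theorem hasInducedCycle_of_closedWalk {x : V} (c : G.Walk x x) (hc : 2 ≤ c.length)
    (hne : ∀ a b, a < b → b < c.length → c.getVert a ≠ c.getVert b)
    (hadj : ∀ a b, a < b → b < c.length → G.Adj (c.getVert a) (c.getVert b) →
      b = a + 1 ∨ (a = 0 ∧ b + 1 = c.length)) :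
    G.HasInducedCycle c.length := by
  set n := c.length
  have : Fact (1 < n) := ⟨by omega⟩
  have key : ∀ i j : ZMod n, i.val < j.val →
      (G.Adj (c.getVert i.val) (c.getVert j.val) ↔ (j = i + 1 ∨ i = j + 1)) := by
    intro i j hij
    have hj := j.val_lt
    rw [ZMod.eq_add_one_or_eq_add_one_iff_of_val_lt hij]
    refine ⟨hadj _ _ hij hj, ?_⟩
    rintro (h | ⟨hi, h⟩)
    · rw [h]; exact c.adj_getVert_succ (by omega)
    · have := c.adj_getVert_succ (i := j.val) (by omega)
      rw [h, c.getVert_length] at this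
      rw [hi, c.getVert_zero]; exact this.symm
  refine ⟨fun i => c.getVert i.val, fun i j hij => ?_, fun i j => ?_⟩
  · by_contra hne'
    rcases Nat.lt_or_gt_of_ne ((ZMod.val_injective n).ne hne') with h | h
    · exact hne _ _ h j.val_lt hij
    · exact hne _ _ h i.val_lt hij.symm
  · rcases lt_trichotomy i.val j.val with h | h | h
    · exact key i j h
    · obtain rfl := ZMod.val_injective n h
      simp only [SimpleGraph.irrefl, false_iff, or_self]
      intro h1
      simpa using congrArg ZMod.val (left_eq_add.1 h1)
    · rw [G.adj_comm, or_comm]; exact key j i h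

open Walk in
theorem hasInducedCycle_of_isInducedPath {x y : V} {p q : G.Walk x y}
    (hp : p.IsInducedPath) (hq : q.IsInducedPath) (hp2 : 2 ≤ p.length) (hq2 : 2 ≤ q.length)
    (hdisj : ∀ i j, 0 < i → i < p.length → 0 < j → j < q.length →
      p.getVert i ≠ q.getVert j)
    (hnadj : ∀ i j, 0 < i → i < p.length → 0 < j → j < q.length →
      ¬ G.Adj (p.getVert i) (q.getVert j)) :
    G.HasInducedCycle (p.length + q.length) := by
  set c := p.append q.reverse
  have hc : c.length = p.length + q.length := by simp [c]
  have hcp : ∀ k ≤ p.length, c.getVert k = p.getVert k := fun k hk => by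
    simp [c, getVert_append', hk]
  have hcq : ∀ k, p.length ≤ k → c.getVert k = q.getVert (c.length - k) := fun k hk => by
    simp only [c, getVert_append, getVert_reverse, if_neg (not_lt.2 hk), hc]
    congr 1; omega
  have hc0 : c.getVert 0 = q.getVert 0 := by simp
  have key : ∀ a b, a < b → b < c.length → c.getVert a ≠ c.getVert b ∧
      (G.Adj (c.getVert a) (c.getVert b) → b = a + 1 ∨ (a = 0 ∧ b + 1 = c.length)) := by
    intro a b hab hb
    by_cases hbp : b ≤ p.length
    · rw [hcp a (by omega), hcp b hbp]
      exact ⟨hp.getVert_ne hab hbp, fun h => .inl (hp.eq_add_one_of_adj hab hbp h)⟩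
    by_cases hap : p.length ≤ a
    · rw [hcq a hap, hcq b (by omega)]
      refine ⟨(hq.getVert_ne (by omega) (by omega)).symm, fun h => .inl ?_⟩
      have := hq.eq_add_one_of_adj (by omega) (by omega) h.symm
      omega
    rcases Nat.eq_zero_or_pos a with rfl | ha
    · rw [hc0, hcq b (by omega)]
      refine ⟨hq.getVert_ne (by omega) (by omega), fun h => .inr ⟨rfl, ?_⟩⟩
      have := hq.eq_add_one_of_adj (by omega) (by omega) h
      omega
    · rw [hcp a (by omega), hcq b (by omega)]
      exact ⟨hdisj _ _ ha (by omega) (by omega) (by omega),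
        fun h => (hnadj _ _ ha (by omega) (by omega) (by omega) h).elim⟩
  rw [← hc]
  exact hasInducedCycle_of_closedWalk c (by omega) (fun a b hab hb => (key a b hab hb).1)
    (fun a b hab hb => (key a b hab hb).2)

section Separators

variable {S : Set V} {a b u v w : V}

def reachAvoiding (G : SimpleGraph V) (S : Set V) (a : V) : Set V :=
  {v | ∃ p : G.Walk a v, ∀ w ∈ p.support, w ∉ S}

def Separates (G : SimpleGraph V) (S : Set V) (a b : V) : Prop :=
  a ∉ S ∧ b ∉ S ∧ b ∉ G.reachAvoiding S a

lemma mem_reachAvoiding_self (ha : a ∉ S) : a ∈ G.reachAvoiding S a :=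
  ⟨.nil, by simpa using ha⟩

lemma notMem_of_mem_reachAvoiding (hv : v ∈ G.reachAvoiding S a) : v ∉ S :=
  let ⟨p, hp⟩ := hv; hp v p.end_mem_support

lemma mem_reachAvoiding_of_adj (hv : v ∈ G.reachAvoiding S a) (hvw : G.Adj v w) (hw : w ∉ S) :
    w ∈ G.reachAvoiding S a := by
  obtain ⟨p, hp⟩ := hv
  refine ⟨p.concat hvw, fun u hu => ?_⟩
  rw [Walk.support_concat, List.mem_append, List.mem_singleton] at hu
  rcases hu with hu | rfl
  exacts [hp u hu, hw]

lemma neighborSet_subset_reachAvoiding_union (hv : v ∈ G.reachAvoiding S a) :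
    G.neighborSet v ⊆ G.reachAvoiding S a ∪ S := by
  intro w hw
  by_cases hwS : w ∈ S
  exacts [.inr hwS, .inl (mem_reachAvoiding_of_adj hv hw hwS)]

lemma mem_reachAvoiding_symm (hb : b ∈ G.reachAvoiding S a) : a ∈ G.reachAvoiding S b := by
  obtain ⟨p, hp⟩ := hb
  exact ⟨p.reverse, fun w hw => hp w (by simpa using hw)⟩

lemma mem_reachAvoiding_trans (hv : v ∈ G.reachAvoiding S a) (hw : w ∈ G.reachAvoiding S v) :
    w ∈ G.reachAvoiding S a := by
  obtain ⟨p, hp⟩ := hv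
  obtain ⟨q, hq⟩ := hw
  refine ⟨p.append q, fun u hu => ?_⟩
  rcases (Walk.mem_support_append_iff _ _).1 hu with hu | hu
  exacts [hp u hu, hq u hu]

lemma exists_walk_of_mem_reachAvoiding (hu : u ∈ G.reachAvoiding S a)
    (hw : w ∈ G.reachAvoiding S a) :
    ∃ p : G.Walk u w, ∀ v ∈ p.support, v ∈ G.reachAvoiding S a := by
  classical
  obtain ⟨p, hp⟩ := mem_reachAvoiding_trans (mem_reachAvoiding_symm hu) hw
  refine ⟨p, fun v hv => mem_reachAvoiding_trans hu ⟨p.takeUntil v hv, fun x hx => ?_⟩⟩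
  exact hp x (p.support_takeUntil_subset_support hv hx)

lemma reachAvoiding_diff_singleton_subset {s : V} (ha : a ∉ S)
    (hs : ∀ u ∈ G.reachAvoiding S a, ¬ G.Adj u s) :
    G.reachAvoiding (S \ {s}) a ⊆ G.reachAvoiding S a := by
  suffices ∀ {u v} (p : G.Walk u v), u ∈ G.reachAvoiding S a →
      (∀ w ∈ p.support, w ∉ S \ {s}) → v ∈ G.reachAvoiding S a from
    fun v ⟨p, hp⟩ => this p (mem_reachAvoiding_self ha) hp
  intro u v p
  induction p with
  | nil => exact fun hu _ => hu
  | @cons u w v huw p ih =>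
    intro hu hp
    have hw : w ∉ S := fun hwS => by
      by_cases hws : w = s
      · exact hs u hu (hws ▸ huw)
      · exact hp w (by simp) ⟨hwS, hws⟩
    exact ih (mem_reachAvoiding_of_adj hu huw hw) fun x hx => hp x (by simp [hx])

lemma separates_comm : G.Separates S a b ↔ G.Separates S b a :=
  ⟨fun ⟨ha, hb, h⟩ => ⟨hb, ha, fun h' => h (mem_reachAvoiding_symm h')⟩,
    fun ⟨hb, ha, h⟩ => ⟨ha, hb, fun h' => h (mem_reachAvoiding_symm h')⟩⟩

namespace Separates

lemma notMem_reachAvoiding (h : G.Separates S a b) (hu : u ∈ G.reachAvoiding S a) :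
    u ∉ G.reachAvoiding S b :=
  fun hu' => h.2.2 (mem_reachAvoiding_trans hu (mem_reachAvoiding_symm hu'))

lemma not_adj (h : G.Separates S a b) (hu : u ∈ G.reachAvoiding S a)
    (hw : w ∈ G.reachAvoiding S b) : ¬ G.Adj u w := fun huw =>
  h.notMem_reachAvoiding (mem_reachAvoiding_of_adj hu huw (notMem_of_mem_reachAvoiding hw)) hw

end Separates

lemma exists_adj_of_minimal_separates (h : Minimal (G.Separates · a b) S) {s : V} (hs : s ∈ S) :
    ∃ u ∈ G.reachAvoiding S a, G.Adj u s := by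
  by_contra! hnadj
  have hsep : G.Separates (S \ {s}) a b :=
    ⟨fun ha => h.1.1 ha.1, fun hb => h.1.2.1 hb.1,
      fun hb => h.1.2.2 (reachAvoiding_diff_singleton_subset h.1.1 hnadj hb)⟩
  exact (h.2 hsep Set.sdiff_subset hs).2 rfl

lemma separates_neighborSet (hab : a ≠ b) (hnadj : ¬ G.Adj a b) :
    G.Separates (G.neighborSet a) a b := by
  refine ⟨G.irrefl, hnadj, ?_⟩
  rintro ⟨_ | ⟨h, p⟩, hp⟩
  · exact hab rfl
  · exact hp _ (by simp) h

open Walk in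
lemma exists_isInducedPath_through_reachAvoiding {x y u u' : V} (hxy : x ≠ y)
    (hnadj : ¬ G.Adj x y) (hu : u ∈ G.reachAvoiding S a) (hu' : u' ∈ G.reachAvoiding S a)
    (hxu : G.Adj x u) (hyu' : G.Adj y u') :
    ∃ p : G.Walk x y, p.IsInducedPath ∧ 2 ≤ p.length ∧
      ∀ i, 0 < i → i < p.length → p.getVert i ∈ G.reachAvoiding S a := by
  obtain ⟨r, hr⟩ := exists_walk_of_mem_reachAvoiding hu hu'
  obtain ⟨p, hp, hpQ⟩ := exists_isInducedPath_of_support_subset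
    (Q := insert x (insert y (G.reachAvoiding S a))) (cons hxu (r.concat hyu'.symm)) (by
      intro v hv
      simp only [support_cons, support_concat, List.mem_cons, List.mem_append,
        List.not_mem_nil, or_false] at hv
      rcases hv with rfl | hv | rfl
      exacts [.inl rfl, .inr (.inr (hr v hv)), .inr (.inl rfl)])
  refine ⟨p, hp, p.two_le_length_of_not_adj hxy hnadj, fun i hi hil => ?_⟩
  rcases hpQ _ (p.getVert_mem_support i) with h | h | h
  · exact absurd (h.trans p.getVert_zero.symm) (hp.getVert_ne hi hil.le).symm
  · exact absurd (h.trans p.getVert_length.symm) (hp.getVert_ne hil le_rfl)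
  · exact h

/-- Two nonadjacent vertices of the separator would be joined by induced paths through both
sides, which together form an induced cycle of length at least 4. -/
theorem Chordal.isClique_of_minimal_separates (hG : G.Chordal)
    (hS : Minimal (G.Separates · a b) S) : G.IsClique S := by
  have hS' : Minimal (G.Separates · b a) S := by simpa only [separates_comm] using hS
  intro x hx y hy hxy
  by_contra hnadj
  obtain ⟨u, hu, hux⟩ := exists_adj_of_minimal_separates hS hx
  obtain ⟨u', hu', huy⟩ := exists_adj_of_minimal_separates hS hy
  obtain ⟨v, hv, hvx⟩ := exists_adj_of_minimal_separates hS' hx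
  obtain ⟨v', hv', hvy⟩ := exists_adj_of_minimal_separates hS' hy
  obtain ⟨p, hp, hp2, hpA⟩ :=
    exists_isInducedPath_through_reachAvoiding hxy hnadj hu hu' hux.symm huy.symm
  obtain ⟨q, hq, hq2, hqB⟩ :=
    exists_isInducedPath_through_reachAvoiding hxy hnadj hv hv' hvx.symm hvy.symm
  refine hG _ (by omega) (hasInducedCycle_of_isInducedPath hp hq hp2 hq2 ?_ ?_)
  · exact fun i j hi hip hj hjq h =>
      hS.1.notMem_reachAvoiding (hpA i hi hip) (h ▸ hqB j hj hjq)
  · exact fun i j hi hip hj hjq => hS.1.not_adj (hpA i hi hip) (hqB j hj hjq)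

end Separators

def IsSimplicial (G : SimpleGraph V) (v : V) : Prop :=
  G.IsClique (G.neighborSet v)

lemma Chordal.induce (hG : G.Chordal) (W : Set V) : (G.induce W).Chordal := by
  rintro n hn ⟨f, hinj, hf⟩
  exact hG n hn ⟨(↑) ∘ f, Subtype.val_injective.comp hinj, fun i j => by simpa using hf i j⟩

lemma IsSimplicial.of_induce {W : Set V} {v : W} (h : (G.induce W).IsSimplicial v)
    (hN : G.neighborSet v ⊆ W) : G.IsSimplicial v := by
  intro x hx y hy hxy
  simpa using h (show (⟨x, hN hx⟩ : W) ∈ _ from by simpa using hx)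
    (show (⟨y, hN hy⟩ : W) ∈ _ from by simpa using hy) (by simpa using hxy)

/-- `hW` is Dirac's lemma for `G[W]`; of its two nonadjacent simplicial vertices at most one lies
in the clique `W \ A`. -/
lemma exists_isSimplicial_mem {W A : Set V} {a : V} (ha : a ∈ A)
    (hN : ∀ v ∈ A, G.neighborSet v ⊆ W) (hWA : G.IsClique (W \ A))
    (hW : G.IsClique W ∨ ∃ x y : W, x ≠ y ∧ ¬ (G.induce W).Adj x y ∧
      (G.induce W).IsSimplicial x ∧ (G.induce W).IsSimplicial y) :
    ∃ x ∈ A, G.IsSimplicial x := by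
  rcases hW with hW | ⟨x, y, hxy, hnadj, hx, hy⟩
  · exact ⟨a, ha, hW.subset (hN a ha)⟩
  have : (x : V) ∈ A ∨ (y : V) ∈ A := by
    by_contra! h
    exact hnadj (by simpa using hWA ⟨x.2, h.1⟩ ⟨y.2, h.2⟩ (Subtype.val_injective.ne hxy))
  rcases this with h | h
  exacts [⟨x, h, hx.of_induce (hN x h)⟩, ⟨y, h, hy.of_induce (hN y h)⟩]

/-- Dirac's lemma: a minimal separator of two nonadjacent vertices is a clique, and each side of
it contains a vertex that is simplicial in `G`. -/
theorem Chordal.eq_top_or_exists_isSimplicial_pair [Finite V] (hG : G.Chordal) :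
    G = ⊤ ∨ ∃ x y, x ≠ y ∧ ¬ G.Adj x y ∧ G.IsSimplicial x ∧ G.IsSimplicial y := by
  induction hn : Nat.card V using Nat.strong_induction_on generalizing V with
  | _ n ih =>
  rcases eq_or_ne G ⊤ with h | h
  · exact .inl h
  obtain ⟨a, b, hab, hnadj⟩ := ne_top_iff_exists_not_adj.1 h
  obtain ⟨S, -, hS⟩ := Finite.exists_le_minimal (p := (G.Separates · a b))
    (separates_neighborSet hab hnadj)
  have hSc := hG.isClique_of_minimal_separates hS
  have side : ∀ {a b}, Minimal (G.Separates · a b) S →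
      ∃ x ∈ G.reachAvoiding S a, G.IsSimplicial x := by
    intro a b hS
    set W := G.reachAvoiding S a ∪ S
    have hbW : b ∉ W := fun hb => hb.elim hS.1.2.2 hS.1.2.1
    refine exists_isSimplicial_mem (mem_reachAvoiding_self hS.1.1)
      (fun v hv => neighborSet_subset_reachAvoiding_union hv)
      (hSc.subset fun v hv => hv.1.resolve_left hv.2) ?_
    rw [← induce_eq_top]
    exact ih _ (hn ▸ Finite.card_subtype_lt hbW) (hG.induce W) rfl
  obtain ⟨x, hx, hxs⟩ := side hS
  obtain ⟨y, hy, hys⟩ := side (b := a) (by simpa only [separates_comm] using hS)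
  exact .inr ⟨x, y, fun h => hS.1.notMem_reachAvoiding hx (h ▸ hy), hS.1.not_adj hx hy,
    hxs, hys⟩

lemma Chordal.exists_isSimplicial [Finite V] [Nonempty V] (hG : G.Chordal) :
    ∃ v, G.IsSimplicial v := by
  rcases hG.eq_top_or_exists_isSimplicial_pair with rfl | ⟨x, -, -, -, hx, -⟩
  · exact ⟨Classical.arbitrary V, fun u _ w _ huw => huw⟩
  · exact ⟨x, hx⟩

section Counting

variable {v : V} {C D : Set V}

lemma IsSimplicial.eq_insert_of_maximal (hv : G.IsSimplicial v) (hC : Maximal G.IsClique C)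
    (hvC : v ∈ C) : C = insert v (G.neighborSet v) := by
  refine hC.eq_of_subset (hv.insert fun _ h _ => h) fun u hu => ?_
  rcases eq_or_ne v u with rfl | hne
  exacts [Set.mem_insert _ _, .inr (hC.1 hvC hu hne)]

lemma maximal_isClique_induce_preimage {W : Set V} (hC : Maximal G.IsClique C) (hCW : C ⊆ W) :
    Maximal (G.induce W).IsClique (Subtype.val ⁻¹' C) := by
  refine ⟨isClique_induce_iff.2 ?_, fun D hD hCD x hx => ?_⟩
  · rw [Subtype.image_preimage_coe, Set.inter_eq_right.2 hCW]
    exact hC.1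
  · refine hC.2 (isClique_induce_iff.1 hD) (fun y hy => ?_) ⟨x, hx, rfl⟩
    exact ⟨⟨y, hCW hy⟩, hCD hy, rfl⟩

lemma eq_of_maximal_of_compl_singleton_inter_eq (hC : Maximal G.IsClique C)
    (hD : Maximal G.IsClique D) (h : {v}ᶜ ∩ C = {v}ᶜ ∩ D) : C = D := by
  have mem : ∀ {C D : Set V}, Maximal G.IsClique C → Maximal G.IsClique D →
      {v}ᶜ ∩ C = {v}ᶜ ∩ D → v ∈ C → v ∈ D := by
    intro C D hC hD h hvC
    by_contra hvD
    have hDC : D ⊆ C := fun x hx =>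
      (h ▸ ⟨ne_of_mem_of_not_mem hx hvD, hx⟩ : x ∈ {v}ᶜ ∩ C).2
    exact hvD (hD.eq_of_subset hC.1 hDC ▸ hvC)
  ext x
  rcases eq_or_ne x v with rfl | hx
  · exact ⟨mem hC hD h, mem hD hC h.symm⟩
  · simpa [hx] using congrArg (x ∈ ·) h

lemma injOn_preimage_val_compl_singleton (v : V) :
    {C : Set V | Maximal G.IsClique C}.InjOn fun C => ((↑) : ({v}ᶜ : Set V) → V) ⁻¹' C :=
  fun _ hC _ hD h =>
    eq_of_maximal_of_compl_singleton_inter_eq hC hD (Subtype.preimage_coe_eq_preimage_coe_iff.1 h)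

lemma ncard_preimage_val_compl_singleton (hvC : v ∉ C) :
    (Subtype.val ⁻¹' C : Set ({v}ᶜ : Set V)).ncard = C.ncard :=
  Set.ncard_preimage_of_injective_subset_range Subtype.val_injective
    (by rwa [Subtype.range_coe, Set.subset_compl_singleton_iff])

variable [Finite V]

lemma IsSimplicial.numMaximalCliques_le (hv : G.IsSimplicial v) :
    numMaximalCliques G ≤ numMaximalCliques (G.induce {v}ᶜ) + 1 := by
  set M := {C : Set V | Maximal G.IsClique C}
  have hsub : M ⊆ insert (insert v (G.neighborSet v)) {C ∈ M | v ∉ C} := fun C hC => by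
    by_cases hvC : v ∈ C
    exacts [.inl (hv.eq_insert_of_maximal hC hvC), .inr ⟨hC, hvC⟩]
  have hinj : {C ∈ M | v ∉ C}.ncard ≤ numMaximalCliques (G.induce {v}ᶜ) :=
    Set.ncard_le_ncard_of_injOn _
      (fun C hC => maximal_isClique_induce_preimage hC.1 (Set.subset_compl_singleton_iff.2 hC.2))
      ((injOn_preimage_val_compl_singleton v).mono fun _ hC => hC.1)
  exact (Set.ncard_le_ncard hsub).trans ((Set.ncard_insert_le _ _).trans (by omega))

lemma IsSimplicial.numMaximalCliques_le_of_maximal (hv : G.IsSimplicial v)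
    (hN : Maximal (G.induce {v}ᶜ).IsClique (Subtype.val ⁻¹' G.neighborSet v)) :
    numMaximalCliques G ≤ numMaximalCliques (G.induce {v}ᶜ) := by
  refine Set.ncard_le_ncard_of_injOn _ (fun C hC => ?_) (injOn_preimage_val_compl_singleton v)
  by_cases hvC : v ∈ C
  · rw [hv.eq_insert_of_maximal hC hvC, Set.mem_ofPred_eq]
    convert hN using 1
    ext ⟨x, hx⟩
    simp [Set.mem_compl_singleton_iff.1 hx]
  · exact maximal_isClique_induce_preimage hC (Set.subset_compl_singleton_iff.2 hvC)

end Counting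

theorem Chordal.numMaximalCliques_add_ncard_le [Finite V] (hG : G.Chordal) {F : Set V}
    (hF : Maximal G.IsClique F) : numMaximalCliques G + F.ncard ≤ Nat.card V + 1 := by
  induction hn : Nat.card V generalizing V with
  | zero =>
    have := Finite.card_eq_zero_iff.1 hn
    rw [Set.eq_empty_of_isEmpty F, Set.ncard_empty]
    exact Set.ncard_le_one_of_subsingleton _
  | succ n ih =>
    have : Nonempty V := Finite.card_pos_iff.1 (by omega)
    obtain ⟨v, hv⟩ := hG.exists_isSimplicial
    have hcard : Nat.card ({v}ᶜ : Set V) = n := by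
      have := Set.ncard_add_ncard_compl {v}
      rw [Set.ncard_singleton] at this
      rw [Nat.card_coe_set_eq]; omega
    by_cases hvF : v ∈ F
    · have hvN : v ∉ G.neighborSet v := G.irrefl
      set N : Set ({v}ᶜ : Set V) := Subtype.val ⁻¹' G.neighborSet v
      have hNF : N.ncard + 1 = F.ncard := by
        rw [ncard_preimage_val_compl_singleton hvN, hv.eq_insert_of_maximal hF hvF,
          Set.ncard_insert_of_notMem hvN]
      have hN : (G.induce {v}ᶜ).IsClique N :=
        isClique_induce_iff.2 (hv.subset (Set.image_preimage_subset _ _))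
      obtain ⟨F', hNF', hF'⟩ := Finite.exists_le_maximal hN
      have := ih (hG.induce _) hF' hcard
      rcases Set.eq_or_ssubset_of_subset hNF' with rfl | hlt
      · have := hv.numMaximalCliques_le_of_maximal hF'
        omega
      · have := Set.ncard_lt_ncard hlt
        have := hv.numMaximalCliques_le
        omega
    · have := ih (hG.induce _) (maximal_isClique_induce_preimage hF
        (Set.subset_compl_singleton_iff.2 hvF)) hcard
      rw [ncard_preimage_val_compl_singleton hvF] at this
      have := hv.numMaximalCliques_le
      omega

end SimpleGraph

theorem maximal_clique_count_le_of_chordal_general {V : Type*} [Fintype V] (G : SimpleGraph V)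
    (hG : G.Chordal) (n t : ℕ) (hn : Fintype.card V = n) (F : Set V)
    (hF : Maximal (fun s => G.IsClique s) F) (hFcard : F.ncard = t + 1) :
    numMaximalCliques G ≤ n - t := by
  have := hG.numMaximalCliques_add_ncard_le hF
  rw [Nat.card_eq_fintype_card, hn, hFcard] at this
  omega

/-- Let `G` be a chordal graph on `n` vertices which has a maximal clique with `t + 1`
vertices for some `t ≥ 1`.  Then `c(G) ≤ n - t`. -/
theorem maximal_clique_count_le_of_chordal {V : Type*} [Fintype V] (G : SimpleGraph V)
    (hG : G.Chordal) (n t : ℕ) (hn : Fintype.card V = n) (ht : 1 ≤ t) (F : Set V)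
    (hF : Maximal (fun s => G.IsClique s) F) (hFcard : F.ncard = t + 1) :
    numMaximalCliques G ≤ n - t :=
  maximal_clique_count_le_of_chordal_general G hG n t hn F hF hFcard
end

section
/- Let G be a graph, T ⊆ V(G), and let v ∈ T be a free vertex of the clique complex Δ(G). Then P_T(G) is not a minimal prime ideal of the binomial edge ideal J_G. -/
/-!
`P_T(G)` is the kernel of the monomial map `x_u ↦ s_γ z_u`, `y_u ↦ t_γ z_u` (`u ∉ T` in the
component `γ` of `G - T`; `x_u, y_u ↦ 0` for `u ∈ T`), hence prime. The kernel lies in `P_T(G)`: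
monomials involving a vertex of `T` lie in `P_T(G)`, and any two other monomials with the same
image are joined by exchanges `x_i y_j ↔ x_j y_i` of vertices `i, j` of one component, whose
differences are multiples of binomials of `P_T(G)`.

If `v ∈ T` is a free vertex, its neighbours form a clique, so putting `v` back does not join two
components of `G - T`. Hence `J_G ⊆ P_{T∖{v}}(G) ⊆ P_T(G)`, and the inclusion is strict because
`x_v ∉ P_{T∖{v}}(G)`; so `P_T(G)` is not minimal over `J_G`.
-/

/-- The graph obtained from `G` by removing all edges meeting `T`.  Vertices of `T` become
isolated, and the connected components of vertices outside of `T` are exactly the connected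
components of the induced subgraph `G - T`; in particular two vertices `u, w ∉ T` lie in the
same connected component of `G - T` iff they are reachable in `G.avoid T`. -/
def SimpleGraph.avoid {V : Type*} (G : SimpleGraph V) (T : Set V) : SimpleGraph V where
  Adj u w := G.Adj u w ∧ u ∉ T ∧ w ∉ T
  symm := ⟨fun _ _ h => ⟨h.1.symm, h.2.2, h.2.1⟩⟩
  loopless := ⟨fun u h => G.loopless.irrefl u h.1⟩

/-- The binomial `f_{ij} = x_i y_j - x_j y_i` in `S = K[x_1,…,x_n,y_1,…,y_n]`, where the
polynomial ring is realized as `MvPolynomial (V ⊕ V) K`, `x_i = X (Sum.inl i)` and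
`y_i = X (Sum.inr i)`. -/
noncomputable def edgeBinomial (K : Type*) [Field K] {V : Type*} (i j : V) :
    MvPolynomial (V ⊕ V) K :=
  MvPolynomial.X (Sum.inl i) * MvPolynomial.X (Sum.inr j) -
    MvPolynomial.X (Sum.inl j) * MvPolynomial.X (Sum.inr i)

/-- The binomial edge ideal `J_G` of a graph `G`, generated by the binomials
`f_{ij} = x_i y_j - x_j y_i` for all edges `{i,j}` of `G`. -/
noncomputable def binomialEdgeIdeal (K : Type*) [Field K] {V : Type*} (G : SimpleGraph V) :
    Ideal (MvPolynomial (V ⊕ V) K) :=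
  Ideal.span {f | ∃ i j : V, G.Adj i j ∧ f = edgeBinomial K i j}

/-- The ideal `P_T(G) = (x_v, y_v : v ∈ T) + J_{K_1} + … + J_{K_{c(T)}}`, where
`K_1, …, K_{c(T)}` are the complete graphs on the vertex sets of the connected components
of `G - T`; equivalently, it is generated by the variables `x_v, y_v` for `v ∈ T` together
with the binomials `f_{uw}` for all pairs of distinct vertices `u, w ∉ T` lying in the same
connected component of `G - T`. -/
noncomputable def primeIdealP (K : Type*) [Field K] {V : Type*} (G : SimpleGraph V)
    (T : Set V) : Ideal (MvPolynomial (V ⊕ V) K) :=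
  Ideal.span
    ({f | ∃ v ∈ T, f = MvPolynomial.X (Sum.inl v) ∨ f = MvPolynomial.X (Sum.inr v)} ∪
      {f | ∃ u w : V, u ∉ T ∧ w ∉ T ∧ u ≠ w ∧ (G.avoid T).Reachable u w ∧
        f = edgeBinomial K u w})

theorem Finsupp.exists_apply_ne_zero_of_mapDomain_eq {α β M : Type*} [AddCommMonoid M]
    [Subsingleton (AddUnits M)] {f : α → β} {x y : α →₀ M} (h : x.mapDomain f = y.mapDomain f)
    {a : α} (ha : x a ≠ 0) : ∃ a', f a' = f a ∧ y a' ≠ 0 := by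
  classical
  have hfa : f a ∈ (y.mapDomain f).support := by
    rw [← h, mapDomain_support_of_subsingletonAddUnits]
    exact Finset.mem_image_of_mem f (mem_support_iff.2 ha)
  rw [mapDomain_support_of_subsingletonAddUnits, Finset.mem_image] at hfa
  obtain ⟨a', ha', hfa'⟩ := hfa
  exact ⟨a', hfa', mem_support_iff.1 ha'⟩

theorem Finsupp.exists_eq_add_single_one {α : Type*} {m : α →₀ ℕ} {a : α} (ha : m a ≠ 0) :
    ∃ m₀, m = m₀ + single a 1 :=
  ⟨m - single a 1, (tsub_add_cancel_of_le (single_le_iff.2 (Nat.one_le_iff_ne_zero.2 ha))).symm⟩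

theorem SimpleGraph.IsClique.exists_subset_maximal {V : Type*} {G : SimpleGraph V} {s : Set V}
    (hs : G.IsClique s) : ∃ t, s ⊆ t ∧ Maximal G.IsClique t :=
  zorn_subset_nonempty {t | G.IsClique t} (fun c hc hchain _ =>
    ⟨⋃₀ c, (SimpleGraph.isClique_sUnion hchain.directedOn).2 hc,
      fun _ => Set.subset_sUnion_of_mem⟩) s hs

theorem SimpleGraph.isClique_neighborSet_of_existsUnique_maximal {V : Type*} {G : SimpleGraph V}
    {v : V} (h : ∃! s : Set V, Maximal G.IsClique s ∧ v ∈ s) : G.IsClique (G.neighborSet v) := by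
  obtain ⟨s, ⟨hs, -⟩, huniq⟩ := h
  refine hs.prop.subset fun a hva => ?_
  obtain ⟨t, hvat, ht⟩ := (G.isClique_pair.2 fun _ => hva).exists_subset_maximal
  exact huniq t ⟨ht, hvat (by simp)⟩ ▸ hvat (by simp)

/-- The second conjunct lets the walk pass through `v`: the two neighbours of `v` around it are
adjacent, so `v` can be skipped. -/
theorem SimpleGraph.Walk.reachable_avoid_of_isClique_neighborSet {V : Type*} {G : SimpleGraph V}
    {T : Set V} {v w : V} (hv : G.IsClique (G.neighborSet v)) (hw : w ∉ T) {a : V}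
    (p : (G.avoid (T \ {v})).Walk a w) :
    (a ∉ T → (G.avoid T).Reachable a w) ∧
      (a ∈ T → ∀ b, G.Adj a b → b ∉ T → (G.avoid T).Reachable b w) := by
  induction p with
  | nil => exact ⟨fun _ => .refl _, fun ha => absurd ha hw⟩
  | @cons a c _ hac _ ih =>
    obtain ⟨hac, ha, hc⟩ := hac
    obtain ⟨ihc, ihT⟩ := ih hw
    simp only [Set.mem_sdiff, Set.mem_singleton_iff, not_and, not_not] at ha hc
    refine ⟨fun haT => ?_, fun haT b hab hbT => ?_⟩
    · by_cases hcT : c ∈ T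
      · exact ihT hcT a hac.symm haT
      · exact (show (G.avoid T).Adj a c from ⟨hac, haT, hcT⟩).reachable.trans (ihc hcT)
    · obtain rfl := ha haT
      have hcT : c ∉ T := fun hcT => hac.ne (hc hcT).symm
      by_cases hbc : b = c
      · exact hbc ▸ ihc hcT
      · exact (show (G.avoid T).Adj b c from ⟨hv hab hac hbc, hbT, hcT⟩).reachable.trans (ihc hcT)

namespace primeIdealP

open MvPolynomial

variable {K : Type*} [Field K] {V : Type*} {G : SimpleGraph V} {T : Set V}

def vertexOf : V ⊕ V → V := Sum.elim id id

@[simp] lemma vertexOf_inl (u : V) : vertexOf (.inl u) = u := rfl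

@[simp] lemma vertexOf_inr (u : V) : vertexOf (.inr u) = u := rfl

@[simp] lemma vertexOf_swap (i : V ⊕ V) : vertexOf i.swap = vertexOf i := by
  cases i <;> rfl

lemma eq_swap_of_vertexOf_eq {i j : V ⊕ V} (h : vertexOf j = vertexOf i) (hne : j ≠ i) :
    j = i.swap := by
  rcases i with u | u <;> rcases j with w | w <;> simp_all

variable (G T) in
def compOf : V ⊕ V → (G.avoid T).ConnectedComponent ⊕ (G.avoid T).ConnectedComponent :=
  Sum.map (G.avoid T).connectedComponentMk (G.avoid T).connectedComponentMk

@[simp] lemma compOf_swap (i : V ⊕ V) : compOf G T i.swap = (compOf G T i).swap := by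
  cases i <;> rfl

lemma ne_swap_of_compOf_eq {i j : V ⊕ V} (h : compOf G T j = compOf G T i) : j ≠ i.swap := by
  rintro rfl
  rcases i with u | u <;> simp [compOf] at h

lemma X_mem {i : V ⊕ V} (hi : vertexOf i ∈ T) : (X i : MvPolynomial _ K) ∈ primeIdealP K G T := by
  refine Ideal.subset_span (Or.inl ⟨vertexOf i, hi, ?_⟩)
  cases i <;> simp

lemma monomial_mem {m : (V ⊕ V) →₀ ℕ} {i : V ⊕ V} (hm : m i ≠ 0) (hi : vertexOf i ∈ T) (r : K) :
    monomial m r ∈ primeIdealP K G T :=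
  Ideal.mem_of_dvd _ (X_dvd_monomial.2 (Or.inr hm)) (X_mem hi)

lemma edgeBinomial_mem {u w : V} (hu : u ∉ T) (hw : w ∉ T) (hne : u ≠ w)
    (h : (G.avoid T).Reachable u w) : edgeBinomial K u w ∈ primeIdealP K G T :=
  Ideal.subset_span (Or.inr ⟨u, w, hu, hw, hne, h, rfl⟩)

lemma edgeBinomial_mem_of_left {u : V} (hu : u ∈ T) (w : V) :
    edgeBinomial K u w ∈ primeIdealP K G T :=
  sub_mem (Ideal.mul_mem_right _ _ (X_mem (i := .inl u) hu))
    (Ideal.mul_mem_left _ _ (X_mem (i := .inr u) hu))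

lemma edgeBinomial_mem_of_right (u : V) {w : V} (hw : w ∈ T) :
    edgeBinomial K u w ∈ primeIdealP K G T :=
  sub_mem (Ideal.mul_mem_left _ _ (X_mem (i := .inr w) hw))
    (Ideal.mul_mem_right _ _ (X_mem (i := .inl w) hw))

lemma X_mul_X_swap_sub_mem {i j : V ⊕ V} (hi : vertexOf i ∉ T) (hj : vertexOf j ∉ T)
    (hne : i ≠ j) (h : compOf G T i = compOf G T j) :
    (X i * X j.swap - X j * X i.swap : MvPolynomial _ K) ∈ primeIdealP K G T := by
  rcases i with u | u <;> rcases j with w | w <;>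
    simp only [compOf, Sum.map_inl, Sum.map_inr, reduceCtorEq, Sum.inl.injEq, Sum.inr.injEq,
      ne_eq, vertexOf_inl, vertexOf_inr, Sum.swap_inl, Sum.swap_inr] at h hne hi hj ⊢
  · exact edgeBinomial_mem hi hj hne (SimpleGraph.ConnectedComponent.exact h)
  · have := edgeBinomial_mem (K := K) hj hi (Ne.symm hne)
      (SimpleGraph.ConnectedComponent.exact h.symm)
    rw [edgeBinomial] at this
    convert this using 1
    ring

variable (K G T) in
open Classical in
/-- The monomial map `x_u ↦ s_γ z_u`, `y_u ↦ t_γ z_u` for `u ∉ T` lying in the component `γ` of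
`G - T`, and `x_u, y_u ↦ 0` for `u ∈ T`; here `s_γ = X (inl (inl γ))`, `t_γ = X (inl (inr γ))`
and `z_u = X (inr u)`. -/
noncomputable def param :
    MvPolynomial (V ⊕ V) K →ₐ[K]
      MvPolynomial (((G.avoid T).ConnectedComponent ⊕ (G.avoid T).ConnectedComponent) ⊕ V) K :=
  aeval fun i => if vertexOf i ∈ T then 0 else X (.inl (compOf G T i)) * X (.inr (vertexOf i))

variable (G T) in
noncomputable def paramExp : ((V ⊕ V) →₀ ℕ) →+
    (((G.avoid T).ConnectedComponent ⊕ (G.avoid T).ConnectedComponent) ⊕ V) →₀ ℕ :=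
  (Finsupp.mapDomain.addMonoidHom Sum.inl).comp (Finsupp.mapDomain.addMonoidHom (compOf G T)) +
    (Finsupp.mapDomain.addMonoidHom Sum.inr).comp (Finsupp.mapDomain.addMonoidHom vertexOf)

lemma paramExp_single (i : V ⊕ V) (k : ℕ) :
    paramExp G T (Finsupp.single i k) =
      Finsupp.single (.inl (compOf G T i)) k + Finsupp.single (.inr (vertexOf i)) k := by
  simp [paramExp]

lemma paramExp_eq_paramExp_iff {m m' : (V ⊕ V) →₀ ℕ} :
    paramExp G T m = paramExp G T m' ↔ m.mapDomain (compOf G T) = m'.mapDomain (compOf G T) ∧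
      m.mapDomain vertexOf = m'.mapDomain vertexOf := by
  refine ⟨fun h => ⟨Finsupp.ext fun c => ?_, Finsupp.ext fun u => ?_⟩, fun h => by
    simp [paramExp, h.1, h.2]⟩
  · simpa [paramExp, Finsupp.mapDomain_apply Sum.inl_injective,
      Finsupp.mapDomain_of_notMem_range] using DFunLike.congr_fun h (.inl c)
  · simpa [paramExp, Finsupp.mapDomain_apply Sum.inr_injective,
      Finsupp.mapDomain_of_notMem_range] using DFunLike.congr_fun h (.inr u)

lemma param_X_of_notMem {i : V ⊕ V} (hi : vertexOf i ∉ T) :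
    param K G T (X i) = monomial (paramExp G T (Finsupp.single i 1)) 1 := by
  rw [param, aeval_X, if_neg hi, paramExp_single, monomial_single_add, pow_one]
  rfl

lemma param_monomial {m : (V ⊕ V) →₀ ℕ} (hm : ∀ i, m i ≠ 0 → vertexOf i ∉ T) (r : K) :
    param K G T (monomial m r) = monomial (paramExp G T m) r := by
  induction m using Finsupp.induction generalizing r with
  | zero => simp [monomial_zero', algebraMap_eq]
  | single_add i k m hi hk ih =>
    have hmi : vertexOf i ∉ T := hm i (by simp [hk])
    have hmm : ∀ j, m j ≠ 0 → vertexOf j ∉ T := fun j hj => hm j (by simp [hj])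
    rw [monomial_single_add, map_mul, map_pow, param_X_of_notMem hmi, ih hmm, monomial_pow,
      monomial_mul, one_pow, one_mul, map_add, ← map_nsmul, Finsupp.smul_single_one]

lemma param_monomial_eq_zero {m : (V ⊕ V) →₀ ℕ} {i : V ⊕ V} (hm : m i ≠ 0)
    (hi : vertexOf i ∈ T) (r : K) : param K G T (monomial m r) = 0 := by
  have hdvd := map_dvd (param K G T) (X_dvd_monomial.2 (Or.inr hm) : X i ∣ monomial m r)
  rwa [param, aeval_X, if_pos hi, zero_dvd_iff] at hdvd

lemma le_ker_param : primeIdealP K G T ≤ RingHom.ker (param K G T) := by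
  rw [primeIdealP, Ideal.span_le]
  rintro f (⟨u, hu, rfl | rfl⟩ | ⟨u, w, hu, hw, -, huw, rfl⟩)
  · simp [param, hu]
  · simp [param, hu]
  · simp [param, edgeBinomial, hu, hw, compOf, SimpleGraph.ConnectedComponent.sound huw]
    ring

lemma forall_vertexOf_notMem_of_paramExp_eq {m m' : (V ⊕ V) →₀ ℕ}
    (h : paramExp G T m = paramExp G T m') (hm : ∀ i, m i ≠ 0 → vertexOf i ∉ T) :
    ∀ i, m' i ≠ 0 → vertexOf i ∉ T := by
  intro i hi
  obtain ⟨i', hi', hmi'⟩ :=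
    Finsupp.exists_apply_ne_zero_of_mapDomain_eq (paramExp_eq_paramExp_iff.1 h.symm).2 hi
  exact hi' ▸ hm i' hmi'

/-- If `X i` does not divide `X^m'`, then `X^m'` is divisible by `X i.swap` (same vertex) and by
some `X j` with `compOf j = compOf i`; one exchange `X j X i.swap ↦ X i X j.swap` yields `m''`. -/
lemma exists_exchange {m m' : (V ⊕ V) →₀ ℕ} (h : paramExp G T m = paramExp G T m')
    (hm : ∀ i, m i ≠ 0 → vertexOf i ∉ T) {i : V ⊕ V} (hi : m i ≠ 0) :
    ∃ m'', m'' i ≠ 0 ∧ paramExp G T m'' = paramExp G T m' ∧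
      (monomial m'' 1 - monomial m' 1 : MvPolynomial _ K) ∈ primeIdealP K G T := by
  by_cases hi' : m' i ≠ 0
  · exact ⟨m', hi', rfl, by simp⟩
  obtain ⟨hcomp, hvert⟩ := paramExp_eq_paramExp_iff.1 h
  obtain ⟨j, hji, hj⟩ := Finsupp.exists_apply_ne_zero_of_mapDomain_eq hcomp hi
  obtain ⟨k, hki, hk⟩ := Finsupp.exists_apply_ne_zero_of_mapDomain_eq hvert hi
  obtain rfl : k = i.swap := eq_swap_of_vertexOf_eq hki (by rintro rfl; exact hi' hk)
  have hij : i ≠ j := by rintro rfl; exact hi' hj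
  have hjT := forall_vertexOf_notMem_of_paramExp_eq h hm j hj
  obtain ⟨m₁, rfl⟩ := Finsupp.exists_eq_add_single_one hj
  obtain ⟨m₀, rfl⟩ : ∃ m₀, m₁ = m₀ + Finsupp.single i.swap 1 := by
    refine Finsupp.exists_eq_add_single_one ?_
    simpa [Finsupp.single_apply, ne_swap_of_compOf_eq hji] using hk
  refine ⟨m₀ + Finsupp.single i 1 + Finsupp.single j.swap 1, by simp, ?_, ?_⟩
  · simp only [map_add, paramExp_single, vertexOf_swap, compOf_swap, hji]
    abel
  · have hmon : (monomial (m₀ + Finsupp.single i 1 + Finsupp.single j.swap 1) 1 -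
        monomial (m₀ + Finsupp.single i.swap 1 + Finsupp.single j 1) 1 : MvPolynomial _ K) =
        monomial m₀ 1 * (X i * X j.swap - X j * X i.swap) := by
      simp only [X, monomial_mul, mul_sub, one_mul, add_assoc, add_comm (Finsupp.single i.swap 1)]
    rw [hmon]
    exact Ideal.mul_mem_left _ _ (X_mul_X_swap_sub_mem (hm i hi) hjT hij hji.symm)

theorem monomial_sub_monomial_mem {m m' : (V ⊕ V) →₀ ℕ} (h : paramExp G T m = paramExp G T m') :
    (monomial m 1 - monomial m' 1 : MvPolynomial _ K) ∈ primeIdealP K G T := by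
  induction hn : m.degree generalizing m m' with
  | zero =>
    obtain rfl : m = 0 := (Finsupp.degree_eq_zero_iff m).1 hn
    obtain rfl : m' = 0 := by
      have h0 := (paramExp_eq_paramExp_iff.1 h).2
      rwa [Finsupp.mapDomain_zero, eq_comm,
        Finsupp.mapDomain_apply_eq_zero_iff_of_subsingletonAddUnits] at h0
    simp
  | succ n ih =>
    by_cases hm : ∀ i, m i ≠ 0 → vertexOf i ∉ T
    · obtain ⟨i, hi⟩ : ∃ i, m i ≠ 0 := by
        by_contra! h0
        simp [show m = 0 from Finsupp.ext h0] at hn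
      obtain ⟨m'', hi'', h'', hmem⟩ := exists_exchange (K := K) h hm hi
      obtain ⟨m₀, rfl⟩ := Finsupp.exists_eq_add_single_one hi
      obtain ⟨m''₀, rfl⟩ := Finsupp.exists_eq_add_single_one hi''
      have h₀ : paramExp G T m₀ = paramExp G T m''₀ := by
        simpa only [map_add, add_left_inj] using h.trans h''.symm
      have hsplit : (monomial (m₀ + Finsupp.single i 1) 1 - monomial m' 1 : MvPolynomial _ K) =
          X i * (monomial m₀ 1 - monomial m''₀ 1) +
            (monomial (m''₀ + Finsupp.single i 1) 1 - monomial m' 1) := by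
        simp only [monomial_add_single, pow_one]
        ring
      rw [hsplit]
      exact add_mem (Ideal.mul_mem_left _ _ (ih h₀ (by simpa using hn))) hmem
    · have hm' : ¬ ∀ i, m' i ≠ 0 → vertexOf i ∉ T := fun hm' =>
        hm (forall_vertexOf_notMem_of_paramExp_eq h.symm hm')
      push Not at hm hm'
      obtain ⟨i, hi, hiT⟩ := hm
      obtain ⟨i', hi', hi'T⟩ := hm'
      exact sub_mem (monomial_mem hi hiT 1) (monomial_mem hi' hi'T 1)

variable (K G T) in
/-- A section of `param` on the monomials in its image; elsewhere `Function.invFun` gives a junk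
exponent. -/
noncomputable def paramSection :
    MvPolynomial (((G.avoid T).ConnectedComponent ⊕ (G.avoid T).ConnectedComponent) ⊕ V) K →ₗ[K]
      MvPolynomial (V ⊕ V) K :=
  (basisMonomials _ K).constr K fun e => monomial (Function.invFun (paramExp G T) e) 1

lemma paramSection_monomial
    (e : (((G.avoid T).ConnectedComponent ⊕ (G.avoid T).ConnectedComponent) ⊕ V) →₀ ℕ) (r : K) :
    paramSection K G T (monomial e r) = monomial (Function.invFun (paramExp G T) e) r := by
  have he : (monomial e r : MvPolynomial _ K) = r • basisMonomials _ K e := by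
    simp [smul_monomial]
  rw [he, paramSection, map_smul, Module.Basis.constr_basis, smul_monomial, smul_eq_mul, mul_one]

lemma sub_paramSection_param_mem (f : MvPolynomial (V ⊕ V) K) :
    f - paramSection K G T (param K G T f) ∈ primeIdealP K G T := by
  induction f using MvPolynomial.induction_on' with
  | monomial m r =>
    by_cases hm : ∀ i, m i ≠ 0 → vertexOf i ∉ T
    · rw [param_monomial hm, paramSection_monomial]
      have hinv := Function.invFun_eq (⟨m, rfl⟩ : ∃ m', paramExp G T m' = paramExp G T m)
      have hmem := Ideal.mul_mem_left _ (C r) (monomial_sub_monomial_mem (K := K) hinv.symm)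
      rwa [mul_sub, C_mul_monomial, C_mul_monomial, mul_one] at hmem
    · push Not at hm
      obtain ⟨i, hi, hiT⟩ := hm
      rw [param_monomial_eq_zero hi hiT, map_zero, sub_zero]
      exact monomial_mem hi hiT r
  | add p q hp hq =>
    rw [map_add, map_add, add_sub_add_comm]
    exact add_mem hp hq

theorem eq_ker_param : primeIdealP K G T = RingHom.ker (param K G T) := by
  refine le_antisymm le_ker_param fun f hf => ?_
  simpa [RingHom.mem_ker.1 hf] using sub_paramSection_param_mem (G := G) (T := T) f

theorem isPrime : (primeIdealP K G T).IsPrime := by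
  rw [eq_ker_param]
  exact RingHom.ker_isPrime _

lemma X_notMem {i : V ⊕ V} (hi : vertexOf i ∉ T) :
    (X i : MvPolynomial _ K) ∉ primeIdealP K G T := by
  rw [eq_ker_param, RingHom.mem_ker]
  simp [param, hi, X_ne_zero]

theorem binomialEdgeIdeal_le : binomialEdgeIdeal K G ≤ primeIdealP K G T := by
  rw [binomialEdgeIdeal, Ideal.span_le]
  rintro f ⟨u, w, huw, rfl⟩
  by_cases hu : u ∈ T
  · exact edgeBinomial_mem_of_left hu w
  by_cases hw : w ∈ T
  · exact edgeBinomial_mem_of_right u hw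
  exact edgeBinomial_mem hu hw huw.ne (show (G.avoid T).Adj u w from ⟨huw, hu, hw⟩).reachable

theorem diff_singleton_le {v : V} (hv : G.IsClique (G.neighborSet v)) (hvT : v ∈ T) :
    primeIdealP K G (T \ {v}) ≤ primeIdealP K G T := by
  rw [primeIdealP, Ideal.span_le]
  rintro f (⟨u, ⟨hu, -⟩, rfl | rfl⟩ | ⟨u, w, hu, hw, hne, ⟨p⟩, rfl⟩)
  · exact X_mem (i := .inl u) hu
  · exact X_mem (i := .inr u) hu
  by_cases huv : u = v
  · exact huv ▸ edgeBinomial_mem_of_left hvT w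
  by_cases hwv : w = v
  · exact hwv ▸ edgeBinomial_mem_of_right u hvT
  have huT : u ∉ T := fun h => hu ⟨h, huv⟩
  have hwT : w ∉ T := fun h => hw ⟨h, hwv⟩
  exact edgeBinomial_mem huT hwT hne ((p.reachable_avoid_of_isClique_neighborSet hv hwT).1 huT)

end primeIdealP

theorem primeIdealP_not_minimalPrime_general {V K : Type*} [Field K] (G : SimpleGraph V)
    (T : Set V) (v : V) (hvT : v ∈ T)
    (hfree : ∃! s : Set V, Maximal (fun c => G.IsClique c) s ∧ v ∈ s) :
    primeIdealP K G T ∉ (binomialEdgeIdeal K G).minimalPrimes := by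
  intro hmin
  have hle : primeIdealP K G (T \ {v}) ≤ primeIdealP K G T :=
    primeIdealP.diff_singleton_le (G.isClique_neighborSet_of_existsUnique_maximal hfree) hvT
  have heq := Minimal.eq_of_le (P := fun q : Ideal _ => q.IsPrime ∧ _) hmin
    ⟨primeIdealP.isPrime, primeIdealP.binomialEdgeIdeal_le⟩ hle
  have hxv : (MvPolynomial.X (.inl v) : MvPolynomial (V ⊕ V) K) ∈ primeIdealP K G (T \ {v}) :=
    heq ▸ primeIdealP.X_mem hvT
  exact primeIdealP.X_notMem (by simp) hxv

/-- Let `G` be a graph, `T ⊆ V(G)`, and let `v ∈ T` be a free vertex of the clique complex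
`Δ(G)` (i.e. `v` belongs to exactly one maximal clique of `G`).  Then `P_T(G)` is not a
minimal prime ideal of the binomial edge ideal `J_G`. -/
theorem primeIdealP_not_minimalPrime {V K : Type*} [Fintype V] [Field K] (G : SimpleGraph V)
    (T : Set V) (v : V) (hvT : v ∈ T)
    (hfree : ∃! s : Set V, Maximal (fun c => G.IsClique c) s ∧ v ∈ s) :
    primeIdealP K G T ∉ (binomialEdgeIdeal K G).minimalPrimes :=
  primeIdealP_not_minimalPrime_general G T v hvT hfree
end

section
/- Let G be a graph and v ∈ V(G). Then c(G − v) ≤ c(G), where G − v is the induced subgraph of G on V(G)\{v}. -/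
namespace SimpleGraph

variable {V : Type*} {G : SimpleGraph V} {s : Set V}

theorem IsClique.induce_preimage {T : Set V} (hT : G.IsClique T) :
    (G.induce s).IsClique (Subtype.val ⁻¹' T) :=
  isClique_induce_iff.2 (hT.subset (Set.image_preimage_subset _ _))

theorem exists_maximal_isClique_induce_eq_preimage [Finite V] {t : Set s}
    (ht : Maximal (G.induce s).IsClique t) :
    ∃ T, Maximal G.IsClique T ∧ t = Subtype.val ⁻¹' T := by
  obtain ⟨T, htT, hT⟩ := Finite.exists_le_maximal (isClique_induce_iff.1 ht.1)
  exact ⟨T, hT, ht.eq_of_le hT.1.induce_preimage (Set.image_subset_iff.1 htT)⟩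

theorem numMaximalCliques_induce_le [Finite V] (s : Set V) :
    numMaximalCliques (G.induce s) ≤ numMaximalCliques G := by
  have hsub : {t : Set s | Maximal (G.induce s).IsClique t} ⊆
      Set.preimage Subtype.val '' {T | Maximal G.IsClique T} := by
    intro t ht
    obtain ⟨T, hT, rfl⟩ := exists_maximal_isClique_induce_eq_preimage ht
    exact ⟨T, hT, rfl⟩
  exact (Set.ncard_le_ncard hsub).trans Set.ncard_image_le

end SimpleGraph

/-- Let `G` be a graph and `v ∈ V(G)`.  Then `c(G - v) ≤ c(G)`, where `G - v` is the induced
subgraph of `G` on `V(G) \ {v}`. -/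
theorem numMaximalCliques_deleteVert_le {V : Type*} [Fintype V] (G : SimpleGraph V) (v : V) :
    numMaximalCliques (G.induce {x | x ≠ v}) ≤ numMaximalCliques G :=
  G.numMaximalCliques_induce_le _
end

section
/- Let G be a chordal graph and v a vertex of G which lies in exactly t maximal cliques of G. Then c(G_v) ≤ c(G) − t + 1. In particular, if t ≥ 2, then c(G_v) < c(G). -/
/-- The graph `G_v` on the vertex set of `G`, whose edges are those of `G` together with all
pairs of distinct neighbours of `v`. -/
def SimpleGraph.gv {V : Type*} (G : SimpleGraph V) (v : V) : SimpleGraph V where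
  Adj u w := u ≠ w ∧ (G.Adj u w ∨ (G.Adj v u ∧ G.Adj v w))
  symm := by
    constructor
    rintro u w ⟨h1, h2⟩
    exact ⟨h1.symm, h2.imp (fun h => h.symm) (fun h => ⟨h.2, h.1⟩)⟩
  loopless := ⟨fun u h => h.1 rfl⟩

namespace SimpleGraph

variable {V : Type*} {G : SimpleGraph V}

theorem hasInducedCycle_four {a b c d : V} (hab : G.Adj a b) (hbc : G.Adj b c)
    (hcd : G.Adj c d) (hda : G.Adj d a) (hac : ¬G.Adj a c) (hbd : ¬G.Adj b d) (hac_ne : a ≠ c)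
    (hbd_ne : b ≠ d) :
    G.HasInducedCycle 4 := by
  have hca : ¬G.Adj c a := fun h => hac h.symm
  have hdb : ¬G.Adj d b := fun h => hbd h.symm
  have cases4 : ∀ k : ZMod 4, k = 0 ∨ k = 1 ∨ k = 2 ∨ k = 3 := by decide
  refine ⟨![a, b, c, d], fun i j hij => ?_, fun i j => ?_⟩ <;>
    obtain rfl | rfl | rfl | rfl := cases4 i <;> obtain rfl | rfl | rfl | rfl := cases4 j
  all_goals first
    | rfl
    | simp [hab.ne, hbc.ne, hcd.ne, hda.ne, hab.ne', hbc.ne', hcd.ne', hda.ne', hac_ne, hbd_ne,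
        hac_ne.symm, hbd_ne.symm] at hij
    | simp [hab, hbc, hcd, hda, hab.symm, hbc.symm, hcd.symm, hda.symm, hac, hbd, hca, hdb] <;>
        decide

theorem Chordal.adj_of_four_cycle (hG : G.Chordal) {a b c d : V} (hab : G.Adj a b)
    (hbc : G.Adj b c) (hcd : G.Adj c d) (hda : G.Adj d a) (hac : ¬G.Adj a c) (hac_ne : a ≠ c)
    (hbd_ne : b ≠ d) : G.Adj b d :=
  by_contra fun hbd => hG 4 le_rfl (hasInducedCycle_four hab hbc hcd hda hac hbd hac_ne hbd_ne)

lemma le_gv (v : V) : G ≤ G.gv v := fun _ _ h => ⟨h.ne, Or.inl h⟩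

lemma gv_adj_left_iff {v u : V} : (G.gv v).Adj v u ↔ G.Adj v u :=
  ⟨fun ⟨_, h⟩ => h.elim id fun h => absurd h.1 (G.irrefl), fun h => le_gv v h⟩

lemma gv_adj_iff_of_not_adj {v u x : V} (hvx : ¬G.Adj v x) : (G.gv v).Adj u x ↔ G.Adj u x :=
  ⟨fun ⟨_, h⟩ => h.elim id fun h => absurd h.2 hvx, fun h => le_gv v h⟩

lemma isClique_gv_insert_neighborSet (v : V) :
    (G.gv v).IsClique (insert v (G.neighborSet v)) :=
  isClique_insert.2
    ⟨fun _ hu _ hw huw => ⟨huw, Or.inr ⟨hu, hw⟩⟩, fun _ hu _ => le_gv v hu⟩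

lemma eq_insert_neighborSet_of_maximal_gv {v : V} {s : Set V} (hs : Maximal (G.gv v).IsClique s)
    (hv : v ∈ s) : s = insert v (G.neighborSet v) := by
  refine hs.eq_of_subset (isClique_gv_insert_neighborSet v) fun u hu => ?_
  obtain rfl | huv := eq_or_ne u v
  · exact Set.mem_insert u _
  · exact Set.mem_insert_of_mem v (gv_adj_left_iff.1 (hs.1 hv hu huv.symm))

lemma exists_not_adj_of_maximal_gv {v : V} {s : Set V} (hs : Maximal (G.gv v).IsClique s)
    (hv : v ∉ s) : ∃ x ∈ s, ¬G.Adj v x := by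
  by_contra! h
  exact hv (hs.mem_of_prop_insert (isClique_insert.2 ⟨hs.1, fun u hu _ => le_gv v (h u hu)⟩))

theorem Chordal.isClique_of_maximal_gv (hG : G.Chordal) {v : V} {s : Set V}
    (hs : Maximal (G.gv v).IsClique s) (hv : v ∉ s) : G.IsClique s := by
  obtain ⟨x, hx, hvx⟩ := exists_not_adj_of_maximal_gv hs hv
  intro u hu w hw huw
  obtain h | ⟨hvu, hvw⟩ := (hs.1 hu hw huw).2
  · exact h
  have hux : G.Adj u x := (gv_adj_iff_of_not_adj hvx).1 (hs.1 hu hx (by rintro rfl; exact hvx hvu))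
  have hwx : G.Adj w x := (gv_adj_iff_of_not_adj hvx).1 (hs.1 hw hx (by rintro rfl; exact hvx hvw))
  exact hG.adj_of_four_cycle hvu hux hwx.symm hvw.symm hvx (by rintro rfl; exact hv hx) huw

theorem Chordal.maximal_isClique_of_maximal_gv (hG : G.Chordal) {v : V} {s : Set V}
    (hs : Maximal (G.gv v).IsClique s) (hv : v ∉ s) : Maximal G.IsClique s :=
  ⟨hG.isClique_of_maximal_gv hs hv, fun _ ht hst => hs.2 (ht.mono (le_gv v)) hst⟩

theorem Chordal.setOf_maximal_gv_subset (hG : G.Chordal) (v : V) :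
    {s | Maximal (G.gv v).IsClique s} ⊆
      insert (insert v (G.neighborSet v)) {s | Maximal G.IsClique s ∧ v ∉ s} := by
  intro s hs
  by_cases hv : v ∈ s
  · exact .inl (eq_insert_neighborSet_of_maximal_gv hs hv)
  · exact .inr ⟨hG.maximal_isClique_of_maximal_gv hs hv, hv⟩

end SimpleGraph

/-- Let `G` be a chordal graph and `v` a vertex of `G` which lies in exactly `t` maximal
cliques of `G`.  Then `c(G_v) ≤ c(G) - t + 1`; in particular, if `t ≥ 2`, then
`c(G_v) < c(G)`. -/
theorem numMaximalCliques_gv_le {V : Type*} [Fintype V] (G : SimpleGraph V) (hG : G.Chordal)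
    (v : V) (t : ℕ)
    (ht : {s : Set V | Maximal (fun c => G.IsClique c) s ∧ v ∈ s}.ncard = t) :
    numMaximalCliques (G.gv v) ≤ numMaximalCliques G - t + 1 ∧
      (2 ≤ t → numMaximalCliques (G.gv v) < numMaximalCliques G) := by
  set B := {s : Set V | Maximal G.IsClique s ∧ v ∉ s}
  have hG_split : numMaximalCliques G = t + B.ncard := by
    rw [← ht, numMaximalCliques, ← Set.ncard_inter_add_ncard_sdiff_eq_ncard _ {s | v ∈ s}]
    rfl
  have hGv_le : numMaximalCliques (G.gv v) ≤ B.ncard + 1 :=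
    (Set.ncard_le_ncard (hG.setOf_maximal_gv_subset v) (Set.toFinite _)).trans
      (Set.ncard_insert_le _ _)
  omega
end

section
/- Let G be a graph and v a vertex of G. Then J_{G_v} equals the intersection of the ideals P_T(G) over all subsets T ⊆ V(G) with v ∉ T. -/
/-!
Grade `K[x, y]` by `ℕ^V` with `deg x_t = deg y_t = e_t`; all ideals involved are generated by
homogeneous elements. Each `P_T(G)` with `v ∉ T` contains the generators of `J_{G_v}`, since an
edge `u - w` of `G_v` through the neighbourhood of `v` is a path `u - v - w` in `G - T`.

Conversely, let `f` lie in every such `P_T(G)` and fix a multidegree `a`. For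
`T = {t ≠ v | a_t = 0}` the degree-`a` part of `f` is a combination of terms `m f_uw` with `u, w`
connected in `G - T` and `deg m + e_u + e_w = a`. Shortcutting `v` through the clique on its
neighbours gives a path from `u` to `w` in `G_v` all of whose vertices have `a_t > 0`. Unless
`u, w` are adjacent, the successor `t` of `u` on it is neither `u` nor `w`, so `x_t` or `y_t`
divides `m`; the relation `f_uw z_t = f_tw z_u + f_ut z_w` then moves the endpoint `u` to `t`,
and induction on the length of the path puts `m f_uw` into `J_{G_v}`.
-/

open MvPolynomial

namespace SimpleGraph

variable {V : Type*} {G : SimpleGraph V} {v u w : V}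

theorem Adj.reachable_avoid_of_gv {T : Set V} (h : (G.gv v).Adj u w) (hv : v ∉ T) (hu : u ∉ T)
    (hw : w ∉ T) : (G.avoid T).Reachable u w := by
  rcases h.2 with h | ⟨hvu, hvw⟩
  · exact Adj.reachable (G := G.avoid T) ⟨h, hu, hw⟩
  · exact (Adj.reachable (G := G.avoid T) ⟨hvu.symm, hu, hv⟩).trans
      (Adj.reachable (G := G.avoid T) ⟨hvw, hv, hw⟩)

theorem Reachable.gv_avoid {Z : Set V} (h : (G.avoid (Z \ {v})).Reachable u w) (hu : u ∉ Z)
    (hw : w ∉ Z) : ((G.gv v).avoid Z).Reachable u w := by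
  obtain ⟨p⟩ := h
  -- A walk may pass through `v ∈ Z`; the neighbours of `v` form a clique in `G.gv v`.
  suffices key : ∀ x, (G.avoid (Z \ {v})).Walk x w → (x ∉ Z → ((G.gv v).avoid Z).Reachable x w) ∧
      (x = v → ∀ y ∉ Z, G.Adj v y → ((G.gv v).avoid Z).Reachable y w) from (key u p).1 hu
  intro x q
  clear p hu
  induction q with
  | nil =>
    rename_i w
    refine ⟨fun _ => .rfl, ?_⟩
    intro hwv y hy hvy
    subst w
    exact Adj.reachable (G := (G.gv v).avoid Z) ⟨⟨hvy.ne.symm, .inl hvy.symm⟩, hy, hw⟩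
  | cons hxt q ih =>
    rename_i x t w
    obtain ⟨hxt, -, ht⟩ := hxt
    refine ⟨fun hx => ?_, ?_⟩
    · by_cases htZ : t ∈ Z
      · obtain rfl : t = v := by_contra fun htv => ht ⟨htZ, htv⟩
        exact (ih hw).2 rfl x hx hxt.symm
      · exact (Adj.reachable (G := (G.gv v).avoid Z) ⟨⟨hxt.ne, .inl hxt⟩, hx, htZ⟩).trans
          ((ih hw).1 htZ)
    · intro hxv y hy hvy
      subst x
      have htZ : t ∉ Z := fun htZ => ht ⟨htZ, hxt.ne.symm⟩
      by_cases hyt : y = t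
      · exact hyt ▸ (ih hw).1 htZ
      · exact (Adj.reachable (G := (G.gv v).avoid Z) ⟨⟨hyt, .inr ⟨hvy, hxt⟩⟩, hy, htZ⟩).trans
          ((ih hw).1 htZ)

end SimpleGraph

theorem MvPolynomial.weightedHomogeneousComponent_mul_of_isWeightedHomogeneous_right
    {σ R M : Type*} [CommSemiring R] [AddCommMonoid M] [PartialOrder M] [CanonicallyOrderedAdd M]
    [Sub M] [OrderedSub M] [AddLeftReflectLE M] [DecidableEq M] {w : σ → M}
    {q : MvPolynomial σ R} {d : M} (hq : IsWeightedHomogeneous w q d) (p : MvPolynomial σ R)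
    (n : M) [Decidable (d ≤ n)] :
    weightedHomogeneousComponent w n (p * q) =
      if d ≤ n then weightedHomogeneousComponent w (n - d) p * q else 0 := by
  let := weightedGradedAlgebra R w
  simp_rw [← weightedDecomposition.decompose'_apply]
  exact DirectSum.coe_decompose_mul_of_right_mem _ n hq

section BinomialEdgeIdeal

variable {V : Type*} (K : Type*) [Field K]

theorem edgeBinomial_self (u : V) : edgeBinomial K u u = 0 :=
  sub_self _

theorem edgeBinomial_swap (u w : V) : edgeBinomial K w u = -edgeBinomial K u w := by
  simp only [edgeBinomial]; ring

/-- The three-term Plücker relation `f_uw z_t = f_tw z_u + f_ut z_w`, for `z = x` and `z = y`. -/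
theorem edgeBinomial_mul_X {s : V → V ⊕ V} (hs : s = Sum.inl ∨ s = Sum.inr) (u w t : V) :
    edgeBinomial K u w * X (s t) =
      edgeBinomial K t w * X (s u) + edgeBinomial K u t * X (s w) := by
  rcases hs with rfl | rfl <;> simp only [edgeBinomial] <;> ring

theorem edgeBinomial_mem_of_X_mem {I : Ideal (MvPolynomial (V ⊕ V) K)} {u : V}
    (hx : X (Sum.inl u) ∈ I) (hy : X (Sum.inr u) ∈ I) (w : V) : edgeBinomial K u w ∈ I :=
  sub_mem (I.mul_mem_right _ hx) (I.mul_mem_left _ hy)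

theorem edgeBinomial_mem_binomialEdgeIdeal {G : SimpleGraph V} {u w : V} (h : G.Adj u w) :
    edgeBinomial K u w ∈ binomialEdgeIdeal K G :=
  Ideal.subset_span ⟨u, w, h, rfl⟩

/-- The `ℕ^V`-grading of `K[x, y]` with `deg x_t = deg y_t = e_t`, for which binomial edge ideals
are homogeneous. -/
noncomputable def vertexWeight : V ⊕ V → V →₀ ℕ :=
  Sum.elim (Finsupp.single · 1) (Finsupp.single · 1)

theorem weight_vertexWeight_apply (E : (V ⊕ V) →₀ ℕ) (t : V) :
    Finsupp.weight vertexWeight E t = E (.inl t) + E (.inr t) := by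
  classical
  have : ∀ i, vertexWeight i t = (if i = .inl t then 1 else 0) + (if i = .inr t then 1 else 0) := by
    rintro (s | s) <;> simp [vertexWeight, Finsupp.single_apply]
  simp only [Finsupp.weight_apply, Finsupp.sum_apply, Finsupp.smul_apply, smul_eq_mul, this,
    mul_add, mul_ite, mul_one, mul_zero, Finsupp.sum_add, Finsupp.sum_ite_self_eq']

theorem isWeightedHomogeneous_edgeBinomial (u w : V) :
    IsWeightedHomogeneous vertexWeight (edgeBinomial K u w)
      (Finsupp.single u 1 + Finsupp.single w 1) := by
  have hX := isWeightedHomogeneous_X K (vertexWeight (V := V))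
  refine ((hX _).mul (hX _)).sub ?_
  rw [add_comm]
  exact (hX _).mul (hX _)

theorem edgeBinomial_mul_monomial_mem_of_walk {H : SimpleGraph V} {a : V →₀ ℕ} {u w : V}
    (p : (H.avoid {t | a t = 0}).Walk u w) {E : (V ⊕ V) →₀ ℕ}
    (hE : Finsupp.weight vertexWeight E + Finsupp.single u 1 + Finsupp.single w 1 = a) (r : K) :
    edgeBinomial K u w * monomial E r ∈ binomialEdgeIdeal K H := by
  induction p generalizing E with
  | nil => simp [edgeBinomial_self]
  | @cons u t w hut p ih =>
    obtain ⟨hut, -, ht⟩ := hut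
    by_cases htw : t = w
    · exact htw ▸ Ideal.mul_mem_right _ _ (edgeBinomial_mem_binomialEdgeIdeal K hut)
    have hEt : E (.inl t) + E (.inr t) ≠ 0 := by
      have hat : a t ≠ 0 := ht
      rw [← hE] at hat
      simpa [weight_vertexWeight_apply, Finsupp.single_apply, hut.ne, Ne.symm htw] using hat
    obtain ⟨s, hs, hEs⟩ : ∃ s : V → V ⊕ V, (s = Sum.inl ∨ s = Sum.inr) ∧ E (s t) ≠ 0 := by
      by_cases h : E (.inl t) = 0
      · exact ⟨Sum.inr, .inr rfl, by omega⟩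
      · exact ⟨Sum.inl, .inl rfl, h⟩
    have hws : ∀ x, vertexWeight (s x) = Finsupp.single x 1 := by
      rcases hs with rfl | rfl <;> intro x <;> rfl
    set E' := E - Finsupp.single (s t) 1
    have hmove : ∀ x, X (s x) * monomial E' r = monomial (Finsupp.single (s x) 1 + E') r :=
      fun x => by rw [monomial_single_add, pow_one]
    have hsplit : monomial E r = X (s t) * monomial E' r := by
      rw [hmove, add_comm, Finsupp.sub_add_single_one_cancel hEs]
    rw [hsplit, ← mul_assoc, edgeBinomial_mul_X K hs, add_mul, mul_assoc, mul_assoc, hmove, hmove]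
    refine add_mem (ih ?_) (Ideal.mul_mem_right _ _ (edgeBinomial_mem_binomialEdgeIdeal K hut))
    have hE' := Finsupp.weight_sub_single_add (w := vertexWeight) hEs
    rw [map_add, Finsupp.weight_single, one_smul, hws, ← hE, ← hE', hws]
    abel

theorem binomialEdgeIdeal_gv_le_primeIdealP {G : SimpleGraph V} {v : V} {T : Set V}
    (hv : v ∉ T) : binomialEdgeIdeal K (G.gv v) ≤ primeIdealP K G T := by
  rw [binomialEdgeIdeal, Ideal.span_le]
  rintro _ ⟨u, w, huw, rfl⟩
  have hX : ∀ t ∈ T, X (.inl t) ∈ primeIdealP K G T ∧ X (.inr t) ∈ primeIdealP K G T :=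
    fun t ht => ⟨Ideal.subset_span (.inl ⟨t, ht, .inl rfl⟩),
      Ideal.subset_span (.inl ⟨t, ht, .inr rfl⟩)⟩
  by_cases hu : u ∈ T
  · exact edgeBinomial_mem_of_X_mem K (hX u hu).1 (hX u hu).2 w
  by_cases hw : w ∈ T
  · rw [← neg_neg (edgeBinomial K u w), ← edgeBinomial_swap]
    exact neg_mem (edgeBinomial_mem_of_X_mem K (hX w hw).1 (hX w hw).2 u)
  exact Ideal.subset_span (.inr ⟨u, w, hu, hw, huw.ne, huw.reachable_avoid_of_gv hv hu hw, rfl⟩)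

theorem weightedHomogeneousComponent_mul_edgeBinomial_mem {G : SimpleGraph V} {v : V}
    {a : V →₀ ℕ} {u w : V} (huw : (G.avoid ({t | a t = 0} \ {v})).Reachable u w)
    (c : MvPolynomial (V ⊕ V) K) :
    weightedHomogeneousComponent vertexWeight a (c * edgeBinomial K u w) ∈
      binomialEdgeIdeal K (G.gv v) := by
  classical
  rw [weightedHomogeneousComponent_mul_of_isWeightedHomogeneous_right
    (isWeightedHomogeneous_edgeBinomial K u w)]
  split_ifs with hle
  swap
  · exact zero_mem _
  have hZ : ∀ x ∈ ({u, w} : Set V), x ∉ {t | a t = 0} := by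
    rintro x (rfl | rfl) (hx : a _ = 0) <;> simpa [hx] using hle x
  obtain ⟨p⟩ := huw.gv_avoid (hZ u (.inl rfl)) (hZ w (.inr rfl))
  have hc := weightedHomogeneousComponent_isWeightedHomogeneous (w := vertexWeight)
    (a - (Finsupp.single u 1 + Finsupp.single w 1)) c
  generalize weightedHomogeneousComponent vertexWeight _ c = c at hc ⊢
  induction hc using IsWeightedHomogeneous.induction_on with
  | zero => simp
  | add p q _ _ hp hq => rw [add_mul]; exact add_mem hp hq
  | monomial E r hE =>
    rw [mul_comm]
    exact edgeBinomial_mul_monomial_mem_of_walk K p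
      (by rw [hE, add_assoc, tsub_add_cancel_of_le hle]) r

theorem weightedHomogeneousComponent_mem_binomialEdgeIdeal_gv {G : SimpleGraph V} {v : V}
    (a : V →₀ ℕ) {f : MvPolynomial (V ⊕ V) K}
    (hf : f ∈ primeIdealP K G ({t | a t = 0} \ {v})) :
    weightedHomogeneousComponent vertexWeight a f ∈ binomialEdgeIdeal K (G.gv v) := by
  classical
  suffices ∀ c, weightedHomogeneousComponent vertexWeight a (c * f) ∈ binomialEdgeIdeal K (G.gv v)
    by simpa using this 1
  induction hf using Submodule.span_induction with
  | mem g hg =>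
    intro c
    rcases hg with ⟨t, ht, rfl | rfl⟩ | ⟨u, w, -, -, -, huw, rfl⟩
    iterate 2
      rw [weightedHomogeneousComponent_mul_of_isWeightedHomogeneous_right
        (isWeightedHomogeneous_X K _ _), if_neg (by simpa [vertexWeight] using ht.1)]
      exact zero_mem _
    exact weightedHomogeneousComponent_mul_edgeBinomial_mem K huw c
  | zero => simp
  | add x y _ _ hx hy =>
    intro c
    rw [mul_add, map_add]
    exact add_mem (hx c) (hy c)
  | smul r x _ hx =>
    intro c
    rw [smul_eq_mul, ← mul_assoc]
    exact hx _

end BinomialEdgeIdeal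

theorem binomialEdgeIdeal_gv_eq_inf_general {V K : Type*} [Field K] (G : SimpleGraph V)
    (v : V) :
    binomialEdgeIdeal K (G.gv v) =
      ⨅ T ∈ {T : Set V | v ∉ T}, primeIdealP K G T := by
  refine le_antisymm (le_iInf₂ fun T hv => binomialEdgeIdeal_gv_le_primeIdealP K hv) fun f hf => ?_
  rw [← sum_weightedHomogeneousComponent vertexWeight f,
    finsum_eq_sum _ (weightedHomogeneousComponent_finsupp f)]
  refine Ideal.sum_mem _ fun a _ => weightedHomogeneousComponent_mem_binomialEdgeIdeal_gv K a ?_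
  exact Ideal.mem_iInf.mp (Ideal.mem_iInf.mp hf _) fun h => h.2 rfl

/-- Let `G` be a graph and `v` a vertex of `G`.  Then `J_{G_v}` equals the intersection of
the ideals `P_T(G)` over all subsets `T ⊆ V(G)` with `v ∉ T`. -/
theorem binomialEdgeIdeal_gv_eq_inf {V K : Type*} [Fintype V] [Field K] (G : SimpleGraph V)
    (v : V) :
    binomialEdgeIdeal K (G.gv v) =
      ⨅ T ∈ {T : Set V | v ∉ T}, primeIdealP K G T :=
  binomialEdgeIdeal_gv_eq_inf_general G v
end

section
/- Let G be the connected strongly interval graph on the vertex set {J_0,…,J_k} ∪ {I_1,…,I_r}, where k ≥ 1, J_0 = [0,0], J_i = [i−1,i] for i = 1,…,k, and I_j = [a_j,b_j] ⊆ [0,k]\{k} with a_j a nonnegative integer for j = 1,…,r. For 0 ≤ i ≤ k−1 let F_i = {J_i, J_{i+1}} ∪ {I_t : i ∈ I_t}. Then the maximal cliques of G are exactly F_0, F_1, …, F_{k−1}; in particular c(G) = k. -/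
/-- The interval graph on a set `I` of closed real intervals, encoded as pairs
`(left endpoint, right endpoint)`: two distinct intervals are adjacent iff they intersect. -/
def intervalGraph (I : Set (ℝ × ℝ)) : SimpleGraph I where
  Adj p q := p ≠ q ∧ (Set.Icc p.val.1 p.val.2 ∩ Set.Icc q.val.1 q.val.2).Nonempty
  symm := by
    constructor
    rintro p q ⟨h1, h2⟩
    exact ⟨h1.symm, by rwa [Set.inter_comm]⟩
  loopless := ⟨fun p h => h.1 rfl⟩

/-- The interval `J_i`: `J_0 = [0,0]` and `J_i = [i-1,i]` for `i ≥ 1`. -/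
noncomputable def Jint (i : ℕ) : ℝ × ℝ := if i = 0 then (0, 0) else ((i : ℝ) - 1, (i : ℝ))

/-- The vertex set `{J_0,…,J_k} ∪ {I_1,…,I_r}` of a connected strongly interval graph, where
`I_j = [a j, b j]`. -/
def stronglyIntervalVerts (k r : ℕ) (a : Fin r → ℕ) (b : Fin r → ℝ) : Set (ℝ × ℝ) :=
  (Jint '' {i | i ≤ k}) ∪ (Set.range fun j : Fin r => ((a j : ℝ), b j))

/-- The conditions on the data of a connected strongly interval graph: `k ≥ 1` and each
`I_j = [a j, b j]` is a genuine closed interval, with integer left endpoint `a j`, contained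
in `[0,k] \ {k}`. -/
def StronglyIntervalData (k r : ℕ) (a : Fin r → ℕ) (b : Fin r → ℝ) : Prop :=
  1 ≤ k ∧ ∀ j : Fin r, (a j : ℝ) ≤ b j ∧
    Set.Icc (a j : ℝ) (b j) ⊆ Set.Icc (0 : ℝ) (k : ℝ) \ {(k : ℝ)}

/-- A graph is a strongly interval graph if every connected component of it is isomorphic to
a connected strongly interval graph. -/
def IsStronglyIntervalGraph {V : Type*} (G : SimpleGraph V) : Prop :=
  ∀ c : G.ConnectedComponent, ∃ (k r : ℕ) (a : Fin r → ℕ) (b : Fin r → ℝ),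
    StronglyIntervalData k r a b ∧
    Nonempty ((G.induce c.supp) ≃g intervalGraph (stronglyIntervalVerts k r a b))

/-- The set `F_i = {J_i, J_{i+1}} ∪ {I_t : i ∈ I_t}` of vertices of a connected strongly
interval graph. -/
def Fclique (k r : ℕ) (a : Fin r → ℕ) (b : Fin r → ℝ) (i : ℕ) :
    Set (stronglyIntervalVerts k r a b) :=
  {p | p.val = Jint i ∨ p.val = Jint (i + 1) ∨
    ∃ t : Fin r, p.val = ((a t : ℝ), b t) ∧ (a t : ℝ) ≤ (i : ℝ) ∧ (i : ℝ) ≤ b t}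

theorem SimpleGraph.nonempty_of_maximal_isClique {V : Type*} [Nonempty V] {G : SimpleGraph V}
    {s : Set V} (hs : Maximal G.IsClique s) : s.Nonempty := by
  obtain ⟨v⟩ := ‹Nonempty V›
  rw [Set.nonempty_iff_ne_empty]
  rintro rfl
  exact Set.notMem_empty v (hs.2 (G.isClique_singleton v) (Set.empty_subset _) rfl)

namespace intervalGraph

variable {I : Set (ℝ × ℝ)}

theorem fst_le_snd_of_adj {p q : I} (h : (intervalGraph I).Adj p q) : p.val.1 ≤ q.val.2 :=
  let ⟨_, ⟨hp, _⟩, _, hq⟩ := h.2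
  hp.trans hq

theorem isClique_setOf_mem (x : ℝ) :
    (intervalGraph I).IsClique {p | x ∈ Set.Icc p.val.1 p.val.2} :=
  fun _ hp _ hq hne => ⟨hne, x, hp, hq⟩

theorem maximal_isClique_setOf_mem {p q : I} {x : ℝ} (hp₁ : p.val.1 ≤ x) (hp₂ : p.val.2 = x)
    (hq₁ : q.val.1 = x) (hq₂ : x ≤ q.val.2) :
    Maximal (intervalGraph I).IsClique {v | x ∈ Set.Icc v.val.1 v.val.2} := by
  refine ⟨isClique_setOf_mem x, fun t ht hsub v hv => ?_⟩
  by_contra hvx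
  have hpt : p ∈ t := hsub ⟨hp₁, hp₂.ge⟩
  have hqt : q ∈ t := hsub ⟨hq₁.le, hq₂⟩
  have hvp : v ≠ p := by rintro rfl; exact hvx ⟨hp₁, hp₂.ge⟩
  have hvq : v ≠ q := by rintro rfl; exact hvx ⟨hq₁.le, hq₂⟩
  exact hvx ⟨(fst_le_snd_of_adj (ht hv hpt hvp)).trans_eq hp₂,
    hq₁.symm.trans_le (fst_le_snd_of_adj (ht hqt hv hvq.symm))⟩

theorem subset_setOf_mem_of_isClique {s : Set I} (hs : (intervalGraph I).IsClique s) {q : I}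
    (hq : q ∈ s) (hq_le : q.val.1 ≤ q.val.2) (hmax : ∀ p ∈ s, p.val.1 ≤ q.val.1) :
    s ⊆ {p | q.val.1 ∈ Set.Icc p.val.1 p.val.2} := by
  intro p hp
  rcases eq_or_ne q p with rfl | hqp
  · exact ⟨le_rfl, hq_le⟩
  · exact ⟨hmax p hp, fst_le_snd_of_adj (hs hq hp hqp)⟩

theorem exists_eq_setOf_mem_of_maximal [Nonempty I] (hI : I.Finite)
    (hI_le : ∀ p ∈ I, p.1 ≤ p.2) {s : Set I} (hs : Maximal (intervalGraph I).IsClique s) :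
    ∃ q ∈ s, s = {p | q.val.1 ∈ Set.Icc p.val.1 p.val.2} := by
  have : Finite I := hI.to_subtype
  obtain ⟨q, hq, hmax⟩ := s.exists_max_image (fun p => p.val.1) s.toFinite
    (SimpleGraph.nonempty_of_maximal_isClique hs)
  have hsub := subset_setOf_mem_of_isClique hs.1 hq (hI_le q q.2) hmax
  exact ⟨q, hq, hsub.antisymm (hs.2 (isClique_setOf_mem _) hsub)⟩

end intervalGraph

@[simp]
theorem Jint_zero : Jint 0 = (0, 0) := by simp [Jint]

@[simp]
theorem Jint_succ (i : ℕ) : Jint (i + 1) = ((i : ℝ), (i : ℝ) + 1) := by simp [Jint]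

theorem Jint_snd (i : ℕ) : (Jint i).2 = i := by cases i <;> simp

theorem Jint_fst_le_snd (i : ℕ) : (Jint i).1 ≤ (Jint i).2 := by cases i <;> simp

section StronglyInterval

variable {k r : ℕ} {a : Fin r → ℕ} {b : Fin r → ℝ}

theorem Jint_mem_stronglyIntervalVerts {i : ℕ} (hi : i ≤ k) :
    Jint i ∈ stronglyIntervalVerts k r a b :=
  Or.inl ⟨i, hi, rfl⟩

theorem stronglyIntervalVerts_finite : (stronglyIntervalVerts k r a b).Finite :=
  ((Set.finite_Iic k).image _).union (Set.finite_range _)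

theorem StronglyIntervalData.fst_le_snd (h : StronglyIntervalData k r a b) {p : ℝ × ℝ}
    (hp : p ∈ stronglyIntervalVerts k r a b) : p.1 ≤ p.2 := by
  rcases hp with ⟨i, -, rfl⟩ | ⟨t, rfl⟩
  · exact Jint_fst_le_snd i
  · exact (h.2 t).1

theorem StronglyIntervalData.exists_nat_eq_fst (h : StronglyIntervalData k r a b) {p : ℝ × ℝ}
    (hp : p ∈ stronglyIntervalVerts k r a b) : ∃ n < k, (n : ℝ) = p.1 := by
  rcases hp with ⟨_ | n, hn, rfl⟩ | ⟨t, rfl⟩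
  · exact ⟨0, h.1, by simp⟩
  · exact ⟨n, hn, by simp⟩
  · obtain ⟨hab, hsub⟩ := h.2 t
    obtain ⟨⟨-, hbk⟩, hbk'⟩ := hsub ⟨hab, le_rfl⟩
    exact ⟨a t, by exact_mod_cast hab.trans_lt (hbk.lt_of_ne hbk'), rfl⟩

theorem Fclique_eq (i : ℕ) :
    Fclique k r a b i = {p | (i : ℝ) ∈ Set.Icc p.val.1 p.val.2} := by
  ext ⟨p, hp⟩
  constructor
  · rintro (rfl | rfl | ⟨t, rfl, hat, hbt⟩)
    · cases i <;> simp
    · simp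
    · exact ⟨hat, hbt⟩
  · rintro ⟨hi₁, hi₂⟩
    dsimp only at hi₁ hi₂
    rcases hp with ⟨_ | m, -, rfl⟩ | ⟨t, rfl⟩
    · have : i = 0 := by simpa using hi₂
      exact Or.inl (by simp [this])
    · simp only [Jint_succ] at hi₁ hi₂
      have hi₁' : m ≤ i := by exact_mod_cast hi₁
      have hi₂' : i ≤ m + 1 := by exact_mod_cast hi₂
      rcases (by omega : i = m + 1 ∨ i = m) with rfl | rfl
      · exact Or.inl rfl
      · exact Or.inr (Or.inl rfl)
    · exact Or.inr (Or.inr ⟨t, rfl, hi₁, hi₂⟩)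

theorem Fclique_maximal {i : ℕ} (hi : i < k) :
    Maximal (intervalGraph (stronglyIntervalVerts k r a b)).IsClique (Fclique k r a b i) := by
  rw [Fclique_eq]
  exact intervalGraph.maximal_isClique_setOf_mem
    (p := ⟨Jint i, Jint_mem_stronglyIntervalVerts hi.le⟩)
    (q := ⟨Jint (i + 1), Jint_mem_stronglyIntervalVerts hi⟩)
    (by simpa [Jint_snd] using Jint_fst_le_snd i) (Jint_snd i) (by simp) (by simp)

theorem Fclique_injOn : Set.InjOn (Fclique k r a b) (Set.Iic k) := by
  have hle : ∀ i ≤ k, ∀ j, Fclique k r a b i = Fclique k r a b j → j ≤ i := by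
    intro i hi j hij
    have hJ : (⟨Jint i, Jint_mem_stronglyIntervalVerts hi⟩ : stronglyIntervalVerts k r a b) ∈
        Fclique k r a b j := hij ▸ Or.inl rfl
    rw [Fclique_eq] at hJ
    exact_mod_cast hJ.2.trans_eq (Jint_snd i)
  exact fun i hi j hj hij => (hle j hj i hij.symm).antisymm (hle i hi j hij)

theorem setOf_maximal_isClique_eq (h : StronglyIntervalData k r a b) :
    {s | Maximal (intervalGraph (stronglyIntervalVerts k r a b)).IsClique s} =
      Fclique k r a b '' {i | i < k} := by
  have : Nonempty (stronglyIntervalVerts k r a b) :=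
    ⟨⟨_, Jint_mem_stronglyIntervalVerts k.zero_le⟩⟩
  ext s
  constructor
  · intro hs
    obtain ⟨q, -, rfl⟩ := intervalGraph.exists_eq_setOf_mem_of_maximal
      stronglyIntervalVerts_finite (fun _ => h.fst_le_snd) hs
    obtain ⟨n, hn, hnq⟩ := h.exists_nat_eq_fst q.2
    exact ⟨n, hn, by rw [Fclique_eq, hnq]⟩
  · rintro ⟨i, hi, rfl⟩
    exact Fclique_maximal hi

end StronglyInterval

/-- Let `G` be the connected strongly interval graph on the vertex set
`{J_0,…,J_k} ∪ {I_1,…,I_r}` and, for `0 ≤ i ≤ k-1`, let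
`F_i = {J_i, J_{i+1}} ∪ {I_t : i ∈ I_t}`.  Then the maximal cliques of `G` are exactly
`F_0, F_1, …, F_{k-1}`; in particular `c(G) = k`. -/
theorem maximalCliques_of_stronglyInterval (k r : ℕ) (a : Fin r → ℕ) (b : Fin r → ℝ)
    (h : StronglyIntervalData k r a b) :
    {s : Set (stronglyIntervalVerts k r a b) |
        Maximal (fun t => (intervalGraph (stronglyIntervalVerts k r a b)).IsClique t) s} =
      Fclique k r a b '' {i | i < k} ∧
    numMaximalCliques (intervalGraph (stronglyIntervalVerts k r a b)) = k := by
  have hset := setOf_maximal_isClique_eq h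
  refine ⟨hset, ?_⟩
  rw [numMaximalCliques, hset]
  change (Fclique k r a b '' Set.Iio k).ncard = k
  rw [(Fclique_injOn.mono Set.Iio_subset_Iic_self).ncard_image, Set.ncard_Iio_nat]
end

section
/- Let G be a graph and let v be a free vertex of the clique complex Δ(G). Then c(G) ≤ c(G − v) + 1, where G − v is the induced subgraph of G on V(G)\{v}. -/
/-- Let `G` be a graph and let `v` be a free vertex of the clique complex `Δ(G)` (i.e. `v`
belongs to exactly one maximal clique of `G`).  Then `c(G) ≤ c(G - v) + 1`, where `G - v`
is the induced subgraph of `G` on `V(G) \ {v}`. -/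
theorem numMaximalCliques_le_of_free_vertex {V : Type*} [Fintype V] (G : SimpleGraph V)
    (v : V) (hfree : ∃! s : Set V, Maximal (fun c => G.IsClique c) s ∧ v ∈ s) :
    numMaximalCliques G ≤ numMaximalCliques (G.induce {x | x ≠ v}) + 1 := by
  classical
  obtain ⟨s₀, ⟨hs₀, hvs₀⟩, huniq⟩ := hfree
  set M : Set (Set V) := {s : Set V | Maximal (fun t => G.IsClique t) s} with hM
  set M' : Set (Set {x : V | x ≠ v}) :=
    {s | Maximal (fun t => (G.induce {x : V | x ≠ v}).IsClique t) s} with hM'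
  have key : ∀ s ∈ {t | t ∈ M ∧ v ∉ t},
      (fun x : {x : V | x ≠ v} => (x : V)) ⁻¹' s ∈ M' := by
    rintro s ⟨hs, hvs⟩
    constructor
    · intro a ha b hb hab
      have : G.Adj (a : V) (b : V) := hs.1 ha hb (fun h => hab (Subtype.ext h))
      simpa using this
    · intro t ht hpt
      have himg : G.IsClique (Subtype.val '' t) := by
        rintro x ⟨a, ha, rfl⟩ y ⟨b, hb, rfl⟩ hxy
        have hab : a ≠ b := fun h => hxy (by rw [h])
        have := ht ha hb hab
        simpa using this
      have hsub : s ⊆ Subtype.val '' t := by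
        intro x hx
        have hx' : x ≠ v := fun h => hvs (h ▸ hx)
        exact ⟨⟨x, hx'⟩, hpt hx, rfl⟩
      have := hs.2 himg hsub
      intro a ha
      exact this ⟨a, ha, rfl⟩
  have hinj : Set.InjOn (fun s : Set V => (fun x : {x : V | x ≠ v} => (x : V)) ⁻¹' s)
      {t | t ∈ M ∧ v ∉ t} := by
    rintro s ⟨hs, hvs⟩ t ⟨ht, hvt⟩ h
    have hrec : ∀ (u : Set V), v ∉ u →
        u = Subtype.val '' ((fun x : {x : V | x ≠ v} => (x : V)) ⁻¹' u) := by
      intro u hvu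
      ext x
      constructor
      · intro hx
        have hx' : x ≠ v := fun hh => hvu (hh ▸ hx)
        exact ⟨⟨x, hx'⟩, hx, rfl⟩
      · rintro ⟨a, ha, rfl⟩; exact ha
    rw [hrec s hvs, hrec t hvt]
    exact congrArg (Set.image Subtype.val) h
  have step1 : M ⊆ {t | t ∈ M ∧ v ∉ t} ∪ {s₀} := by
    intro s hs
    by_cases hv : v ∈ s
    · exact Or.inr (huniq s ⟨hs, hv⟩)
    · exact Or.inl ⟨hs, hv⟩
  calc numMaximalCliques G = M.ncard := rfl
    _ ≤ ({t | t ∈ M ∧ v ∉ t} ∪ {s₀}).ncard := Set.ncard_le_ncard step1 (Set.toFinite _)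
    _ ≤ {t | t ∈ M ∧ v ∉ t}.ncard + ({s₀} : Set (Set V)).ncard := Set.ncard_union_le _ _
    _ ≤ M'.ncard + 1 := by
        rw [Set.ncard_singleton]
        have := Set.ncard_le_ncard_of_injOn _ key hinj (Set.toFinite _)
        omega
end

section
/- Let G be a connected chordal graph with L(G) = c(G) = ℓ, and let P: v_0, v_1, …, v_ℓ be an induced path of length ℓ in G. Then for each 0 ≤ t ≤ ℓ−1 there is a unique maximal clique F_t of G containing the edge {v_t, v_{t+1}}, these cliques F_0, …, F_{ℓ−1} are pairwise distinct, and every maximal clique of G equals some F_t. -/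
/-- `f 0, f 1, …, f m` is an induced path in `G`: the vertices are pairwise distinct and two
of them are adjacent if and only if they are consecutive. -/
def IsInducedPath {V : Type*} (G : SimpleGraph V) (m : ℕ) (f : ℕ → V) : Prop :=
  (∀ i ≤ m, ∀ j ≤ m, f i = f j → i = j) ∧
  (∀ i ≤ m, ∀ j ≤ m, (G.Adj (f i) (f j) ↔ (j = i + 1 ∨ i = j + 1)))

/-- The length of a longest induced path in `G`. -/
noncomputable def longestInducedPath {V : Type*} (G : SimpleGraph V) : ℕ :=
  sSup {m | ∃ f : ℕ → V, IsInducedPath G m f}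

/-- `L(G)`: the sum, over the connected components of `G`, of the lengths of longest induced
paths of the components. -/
noncomputable def inducedPathSum {V : Type*} (G : SimpleGraph V) : ℕ :=
  ∑ᶠ c : G.ConnectedComponent, longestInducedPath (G.induce c.supp)

/-- Let `G` be a connected chordal graph with `L(G) = c(G) = ℓ`, and let
`f 0, f 1, …, f ℓ` be an induced path of length `ℓ` in `G`.  Then for each `0 ≤ t ≤ ℓ - 1`
there is a unique maximal clique `F t` of `G` containing the edge `{f t, f (t+1)}`, these
cliques `F 0, …, F (ℓ-1)` are pairwise distinct, and every maximal clique of `G` equals some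
`F t`. -/
theorem maximalCliques_along_longest_inducedPath {V : Type*} [Fintype V] (G : SimpleGraph V)
    (hG : G.Chordal) (hconn : G.Connected) (ℓ : ℕ) (hL : inducedPathSum G = ℓ)
    (hc : numMaximalCliques G = ℓ) (f : ℕ → V) (hf : IsInducedPath G ℓ f) :
    ∃ F : ℕ → Set V,
      (∀ t < ℓ, Maximal (fun s => G.IsClique s) (F t) ∧ f t ∈ F t ∧ f (t + 1) ∈ F t ∧
        ∀ F' : Set V, Maximal (fun s => G.IsClique s) F' → f t ∈ F' → f (t + 1) ∈ F' →
          F' = F t) ∧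
      (∀ s < ℓ, ∀ t < ℓ, F s = F t → s = t) ∧
      (∀ F' : Set V, Maximal (fun s => G.IsClique s) F' → ∃ t < ℓ, F' = F t) := by
  classical
  obtain ⟨hinj, hadj⟩ := hf
  -- Key: no clique contains both `f s` and `f (t+1)` for `s < t < ℓ`.
  have key : ∀ s t : ℕ, s < t → t < ℓ → ∀ C : Set V, G.IsClique C →
      f s ∈ C → f (t + 1) ∈ C → False := by
    intro s t hst htl C hC hs ht1
    have hne : f s ≠ f (t + 1) := by
      intro h
      have := hinj s (by omega) (t + 1) (by omega) h
      omega
    have hadj' := hC hs ht1 hne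
    rw [hadj s (by omega) (t + 1) (by omega)] at hadj'
    omega
  -- Existence of maximal cliques containing each edge.
  have hex : ∀ t : ℕ, ∃ C : Set V, t < ℓ →
      Maximal (fun s => G.IsClique s) C ∧ f t ∈ C ∧ f (t + 1) ∈ C := by
    intro t
    by_cases h : t < ℓ
    · have hedge : G.Adj (f t) (f (t + 1)) := by
        rw [hadj t (by omega) (t + 1) (by omega)]; left; rfl
      have hpair : G.IsClique {f t, f (t + 1)} := by
        rw [SimpleGraph.isClique_pair]; exact fun _ => hedge
      obtain ⟨C, hle, hmax⟩ := Finite.exists_le_maximal hpair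
      exact ⟨C, fun _ => ⟨hmax, hle (by simp), hle (by simp)⟩⟩
    · exact ⟨∅, fun h' => absurd h' h⟩
  choose F hF using hex
  -- Injectivity on `[0, ℓ)`.
  have hFinj : ∀ s < ℓ, ∀ t < ℓ, F s = F t → s = t := by
    intro s hs t ht hFst
    by_contra hne
    rcases Nat.lt_or_ge s t with h | h
    · exact key s t h ht (F t) (hF t ht).1.1 (hFst ▸ (hF s hs).2.1) (hF t ht).2.2
    · have h' : t < s := by omega
      exact key t s h' hs (F s) (hF s hs).1.1 (hFst ▸ (hF t ht).2.1) (hF s hs).2.2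
  -- Every maximal clique is some `F t`, by counting.
  set S : Set (Set V) := {s : Set V | Maximal (fun t => G.IsClique t) s} with hS
  have hsurj : ∀ F' : Set V, Maximal (fun s => G.IsClique s) F' → ∃ t < ℓ, F' = F t := by
    intro F' hF'
    have hsub : F '' ↑(Finset.range ℓ) ⊆ S := by
      rintro _ ⟨t, ht, rfl⟩
      simp only [Finset.coe_range, Set.mem_Iio] at ht
      exact (hF t ht).1
    have hinjOn : Set.InjOn F ↑(Finset.range ℓ) := by
      intro a ha b hb hab
      simp only [Finset.coe_range, Set.mem_Iio] at ha hb
      exact hFinj a ha b hb hab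
    have hcard : (F '' ↑(Finset.range ℓ)).ncard = ℓ := by
      rw [Set.ncard_image_of_injOn hinjOn, Set.ncard_coe_finset, Finset.card_range]
    have heq : F '' ↑(Finset.range ℓ) = S :=
      Set.eq_of_subset_of_ncard_le hsub (by rw [hcard]; exact le_of_eq hc) (Set.toFinite S)
    have : F' ∈ F '' ↑(Finset.range ℓ) := heq ▸ hF'
    obtain ⟨t, ht, hFt⟩ := this
    simp only [Finset.coe_range, Set.mem_Iio] at ht
    exact ⟨t, ht, hFt.symm⟩
  refine ⟨F, ?_, hFinj, hsurj⟩
  intro t ht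
  refine ⟨(hF t ht).1, (hF t ht).2.1, (hF t ht).2.2, ?_⟩
  intro F' hF' hft hft1
  obtain ⟨s, hs, rfl⟩ := hsurj F' hF'
  by_contra hne
  have hne' : s ≠ t := fun h => hne (by rw [h])
  rcases Nat.lt_or_ge s t with h | h
  · exact key s t h ht (F s) (hF s hs).1.1 (hF s hs).2.1 hft1
  · have h' : t < s := by omega
    exact key t s h' hs (F s) (hF s hs).1.1 hft (hF s hs).2.2
end

section
/- Let m ≥ 3 and t ≥ 1, and let G = P_m * K_t be the join of the path P_m on m vertices and the complete graph K_t on t vertices. Then G is a strongly interval graph and c(G) = m − 1. -/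
/-- The join `G * H` of two graphs on disjoint vertex sets: all edges of `G` and of `H`,
together with all pairs consisting of a vertex of `G` and a vertex of `H`. -/
def joinGraph {α β : Type*} (G : SimpleGraph α) (H : SimpleGraph β) :
    SimpleGraph (α ⊕ β) where
  Adj u w :=
    match u, w with
    | Sum.inl a, Sum.inl a' => G.Adj a a'
    | Sum.inr b, Sum.inr b' => H.Adj b b'
    | Sum.inl _, Sum.inr _ => True
    | Sum.inr _, Sum.inl _ => True
  symm := by
    constructor
    rintro (a | b) (a' | b') h
    · exact G.adj_symm h
    · trivial
    · trivial
    · exact H.adj_symm h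
  loopless := by
    constructor
    rintro (a | b) h
    · exact G.irrefl h
    · exact H.irrefl h

open Set SimpleGraph

theorem maximal_prod_and_iff {α β : Type*} [Preorder α] [Preorder β] {P : α → Prop}
    {Q : β → Prop} {x : α × β} :
    Maximal (fun y : α × β => P y.1 ∧ Q y.2) x ↔ Maximal P x.1 ∧ Maximal Q x.2 := by
  refine ⟨fun h => ⟨⟨h.prop.1, fun a ha hle => ?_⟩, ⟨h.prop.2, fun b hb hle => ?_⟩⟩,
    fun h => ⟨⟨h.1.prop, h.2.prop⟩, fun y hy hle =>
      ⟨h.1.le_of_ge hy.1 hle.1, h.2.le_of_ge hy.2 hle.2⟩⟩⟩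
  · exact (h.le_of_ge (y := (a, x.2)) ⟨ha, h.prop.2⟩ ⟨hle, le_rfl⟩).1
  · exact (h.le_of_ge (y := (x.1, b)) ⟨h.prop.1, hb⟩ ⟨le_rfl, hle⟩).2

theorem Set.Icc_inter_Icc_nonempty_iff {α : Type*} [Lattice α] {a₁ b₁ a₂ b₂ : α} :
    (Icc a₁ b₁ ∩ Icc a₂ b₂).Nonempty ↔ a₁ ≤ b₁ ∧ a₁ ≤ b₂ ∧ a₂ ≤ b₁ ∧ a₂ ≤ b₂ := by
  rw [Icc_inter_Icc, nonempty_Icc, le_inf_iff, sup_le_iff, sup_le_iff]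
  tauto

section Join

variable {α β : Type*} {G : SimpleGraph α} {H : SimpleGraph β}

@[simp] theorem joinGraph_adj_inl_inl {a a' : α} :
    (joinGraph G H).Adj (.inl a) (.inl a') ↔ G.Adj a a' := Iff.rfl

@[simp] theorem joinGraph_adj_inr_inr {b b' : β} :
    (joinGraph G H).Adj (.inr b) (.inr b') ↔ H.Adj b b' := Iff.rfl

@[simp] theorem joinGraph_adj_inl_inr {a : α} {b : β} :
    (joinGraph G H).Adj (.inl a) (.inr b) := trivial

@[simp] theorem joinGraph_adj_inr_inl {a : α} {b : β} :
    (joinGraph G H).Adj (.inr b) (.inl a) := trivial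

theorem isClique_joinGraph_iff {s : Set (α ⊕ β)} :
    (joinGraph G H).IsClique s ↔ G.IsClique (Sum.inl ⁻¹' s) ∧ H.IsClique (Sum.inr ⁻¹' s) := by
  refine ⟨fun hs => ⟨fun a ha a' ha' hne => ?_, fun b hb b' hb' hne => ?_⟩, ?_⟩
  · exact hs ha ha' (Sum.inl_injective.ne hne)
  · exact hs hb hb' (Sum.inr_injective.ne hne)
  · rintro ⟨hG, hH⟩ (a | b) hx (a' | b') hy hne
    · exact hG hx hy (fun h => hne (congrArg _ h))
    · trivial
    · trivial
    · exact hH hx hy (fun h => hne (congrArg _ h))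

theorem numMaximalCliques_joinGraph :
    numMaximalCliques (joinGraph G H) = numMaximalCliques G * numMaximalCliques H := by
  have hsplit : sumEquiv '' {s | Maximal (joinGraph G H).IsClique s} =
      {s | Maximal G.IsClique s} ×ˢ {s | Maximal H.IsClique s} := by
    rw [OrderIso.image_setOfPred_maximal]
    ext p
    simp only [isClique_joinGraph_iff, sumEquiv_symm_apply, preimage_union,
      preimage_inl_image_inr, preimage_inr_image_inl, preimage_image_eq _ Sum.inl_injective,
      preimage_image_eq _ Sum.inr_injective, union_empty, empty_union, mem_ofPred_eq, mem_prod]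
    exact maximal_prod_and_iff (x := p)
  rw [numMaximalCliques, numMaximalCliques, numMaximalCliques, ← ncard_prod, ← hsplit,
    ncard_image_of_injective _ sumEquiv.injective]

theorem SimpleGraph.Connected.joinGraph_left (hG : G.Connected) : (joinGraph G H).Connected := by
  obtain ⟨a₀⟩ := hG.nonempty
  have hreach : ∀ x, (joinGraph G H).Reachable x (.inl a₀) := by
    rintro (a | b)
    · exact (hG a a₀).map ⟨Sum.inl, id⟩
    · exact joinGraph_adj_inr_inl.reachable
  exact { preconnected := fun x y => (hreach x).trans (hreach y).symm, nonempty := ⟨.inl a₀⟩ }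

end Join

theorem numMaximalCliques_top {V : Type*} : numMaximalCliques (⊤ : SimpleGraph V) = 1 := by
  have : {s : Set V | Maximal (⊤ : SimpleGraph V).IsClique s} = {univ} := by
    ext s
    simp [IsClique.top, maximal_iff_isMax, isMax_iff_eq_top]
  rw [numMaximalCliques, this, ncard_singleton]

section Path

variable {k : ℕ}

theorem exists_isClique_pathGraph_subset_pair (hk : 1 ≤ k) {s : Set (Fin (k + 1))}
    (hs : (pathGraph (k + 1)).IsClique s) : ∃ i : Fin k, s ⊆ {i.castSucc, i.succ} := by
  rcases s.eq_empty_or_nonempty with rfl | hne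
  · exact ⟨⟨0, hk⟩, empty_subset _⟩
  obtain ⟨u, hu, hmin⟩ := s.exists_min_image Fin.val s.toFinite hne
  refine ⟨⟨min u.val (k - 1), by omega⟩, fun w hw => ?_⟩
  have hwu : w = u ∨ u.val + 1 = w.val := by
    rcases eq_or_ne w u with h | h
    · exact .inl h
    · have := pathGraph_adj.mp (hs hu hw h.symm)
      have := hmin w hw
      omega
  have := w.isLt
  simp only [mem_insert_iff, mem_singleton_iff, Fin.ext_iff, Fin.val_castSucc, Fin.val_succ]
  omega

theorem Fin.eq_of_pair_castSucc_succ_subset {i j : Fin k}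
    (h : ({i.castSucc, i.succ} : Set (Fin (k + 1))) ⊆ {j.castSucc, j.succ}) : i = j := by
  have h₁ := h (mem_insert _ _)
  have h₂ := h (mem_insert_of_mem _ rfl)
  simp only [mem_insert_iff, mem_singleton_iff, Fin.ext_iff, Fin.val_castSucc,
    Fin.val_succ] at h₁ h₂
  exact Fin.ext (by omega)

theorem maximal_isClique_pathGraph_iff (hk : 1 ≤ k) {s : Set (Fin (k + 1))} :
    Maximal (pathGraph (k + 1)).IsClique s ↔ ∃ i : Fin k, {i.castSucc, i.succ} = s := by
  have hpair : ∀ i : Fin k, (pathGraph (k + 1)).IsClique {i.castSucc, i.succ} := fun i =>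
    isClique_pair.mpr fun _ => pathGraph_adj.mpr (.inl rfl)
  constructor
  · intro hs
    obtain ⟨i, hi⟩ := exists_isClique_pathGraph_subset_pair hk hs.prop
    exact ⟨i, (hs.eq_of_subset (hpair i) hi).symm⟩
  · rintro ⟨i, rfl⟩
    refine ⟨hpair i, fun t ht hit => ?_⟩
    obtain ⟨j, hj⟩ := exists_isClique_pathGraph_subset_pair hk ht
    rwa [Fin.eq_of_pair_castSucc_succ_subset (hit.trans hj)]

theorem numMaximalCliques_pathGraph (hk : 1 ≤ k) :
    numMaximalCliques (pathGraph (k + 1)) = k := by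
  have hrange : {s | Maximal (pathGraph (k + 1)).IsClique s} =
      range fun i : Fin k => ({i.castSucc, i.succ} : Set (Fin (k + 1))) := by
    ext s
    exact maximal_isClique_pathGraph_iff hk
  rw [numMaximalCliques, hrange, ncard_range_of_injective
    fun i j h => Fin.eq_of_pair_castSucc_succ_subset h.subset, Nat.card_eq_fintype_card,
    Fintype.card_fin]

end Path

theorem IsStronglyIntervalGraph.of_connected {V : Type*} {G : SimpleGraph V} (hG : G.Connected)
    {k r : ℕ} {a : Fin r → ℕ} {b : Fin r → ℝ} (hdata : StronglyIntervalData k r a b)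
    (e : G ≃g intervalGraph (stronglyIntervalVerts k r a b)) : IsStronglyIntervalGraph G := by
  intro c
  have hsupp : c.supp = univ := by
    have := hG.preconnected.subsingleton_connectedComponent
    ext v
    simp only [ConnectedComponent.mem_supp_iff, mem_univ, iff_true]
    exact Subsingleton.elim _ _
  exact ⟨k, r, a, b, hdata, ⟨hsupp ▸ G.induceUnivIso.trans e⟩⟩

noncomputable def intervalGraphIsoOfInjective {V : Type*} {G : SimpleGraph V} (f : V → ℝ × ℝ)
    (hf : Function.Injective f)
    (hadj : ∀ x y, x ≠ y → (G.Adj x y ↔ (Icc (f x).1 (f x).2 ∩ Icc (f y).1 (f y).2).Nonempty)) :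
    G ≃g intervalGraph (range f) where
  toEquiv := Equiv.ofInjective f hf
  map_rel_iff' {x y} := by
    by_cases hxy : x = y
    · subst hxy
      simp [intervalGraph]
    · simp only [intervalGraph, Equiv.ofInjective_apply]
      rw [hadj x y hxy]
      exact and_iff_right fun h => hxy (hf (congrArg Subtype.val h))

/-- `J_0 = [0, 0]` fits the pattern `[i - 1, i]` thanks to truncated subtraction. -/
theorem Jint_eq (i : ℕ) : Jint i = (((i - 1 : ℕ) : ℝ), (i : ℝ)) := by
  rcases Nat.eq_zero_or_pos i with rfl | hi
  · simp [Jint]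
  · simp [Jint, hi.ne', Nat.cast_sub hi]

section Model

variable {k t : ℕ}

/-- Distinct right endpoints in `(k - 1, k)`: the interval `[0, cliqueRightEnd k j]` then meets
every `J_i` with `i ≤ k` and is none of them. -/
noncomputable def cliqueRightEnd (k : ℕ) (j : Fin t) : ℝ := k - ((j : ℝ) + 2)⁻¹

theorem sub_one_lt_cliqueRightEnd (j : Fin t) : (k : ℝ) - 1 < cliqueRightEnd k j := by
  have : ((j : ℝ) + 2)⁻¹ < 1 :=
    inv_lt_one_of_one_lt₀ (by linarith [(j : ℕ).cast_nonneg (α := ℝ)])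
  unfold cliqueRightEnd
  linarith

theorem cliqueRightEnd_lt (j : Fin t) : cliqueRightEnd k j < k := by
  unfold cliqueRightEnd
  have : (0 : ℝ) < ((j : ℝ) + 2)⁻¹ := by positivity
  linarith

theorem cliqueRightEnd_injective : Function.Injective (cliqueRightEnd (t := t) k) := by
  intro j j' h
  simp only [cliqueRightEnd, sub_right_inj, inv_inj, add_left_inj, Nat.cast_inj] at h
  exact Fin.ext h

theorem stronglyIntervalData_cliqueRightEnd (hk : 1 ≤ k) :
    StronglyIntervalData k t (fun _ => 0) (cliqueRightEnd k) := by
  refine ⟨hk, fun j => ⟨?_, fun x hx => ?_⟩⟩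
  · have : (1 : ℝ) ≤ k := by exact_mod_cast hk
    simp only [Nat.cast_zero]
    linarith [sub_one_lt_cliqueRightEnd (k := k) j]
  · have := cliqueRightEnd_lt (k := k) j
    simp only [Nat.cast_zero, mem_Icc] at hx
    exact ⟨⟨hx.1, by linarith⟩, ne_of_lt (by linarith)⟩

noncomputable def joinPathTopIntervals (k t : ℕ) : Fin (k + 1) ⊕ Fin t → ℝ × ℝ :=
  Sum.elim (fun i => Jint i) (fun j => (0, cliqueRightEnd k j))

theorem range_joinPathTopIntervals :
    range (joinPathTopIntervals k t) =
      stronglyIntervalVerts k t (fun _ => 0) (cliqueRightEnd k) := by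
  rw [joinPathTopIntervals, Sum.elim_range, stronglyIntervalVerts, range_comp' Jint Fin.val,
    Fin.range_val]
  congr
  · ext i; simp
  · simp

theorem joinPathTopIntervals_injective : Function.Injective (joinPathTopIntervals k t) := by
  refine Function.Injective.sumElim (fun i i' h => Fin.ext ?_) (fun j j' h => ?_) fun i j h => ?_
  · simpa [Jint_eq] using congrArg Prod.snd h
  · exact cliqueRightEnd_injective (congrArg Prod.snd h)
  · have hi : (i : ℝ) = cliqueRightEnd k j := by simpa [Jint_eq] using congrArg Prod.snd h
    have h₁ := sub_one_lt_cliqueRightEnd (k := k) j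
    have h₂ := cliqueRightEnd_lt (k := k) j
    rw [← hi] at h₁ h₂
    have : (i : ℕ) < k := by exact_mod_cast h₂
    have : k < (i : ℕ) + 1 := by exact_mod_cast (by linarith : (k : ℝ) < i + 1)
    omega

theorem joinGraph_pathGraph_top_adj_iff (hk : 1 ≤ k) {x y : Fin (k + 1) ⊕ Fin t} (hxy : x ≠ y) :
    (joinGraph (pathGraph (k + 1)) ⊤).Adj x y ↔
      (Icc (joinPathTopIntervals k t x).1 (joinPathTopIntervals k t x).2 ∩
        Icc (joinPathTopIntervals k t y).1 (joinPathTopIntervals k t y).2).Nonempty := by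
  have hJ : ∀ (i : Fin (k + 1)) (j : Fin t), ((i - 1 : ℕ) : ℝ) ≤ cliqueRightEnd k j := by
    intro i j
    have : ((i - 1 : ℕ) : ℝ) + 1 ≤ k := by exact_mod_cast (by omega : (i - 1 : ℕ) + 1 ≤ k)
    linarith [sub_one_lt_cliqueRightEnd (k := k) j]
  have hb : ∀ j : Fin t, 0 ≤ cliqueRightEnd k j := fun j => by
    simpa using hJ 0 j
  rcases x with u | j <;> rcases y with v | j' <;>
    simp [joinPathTopIntervals, Jint_eq, Icc_inter_Icc_nonempty_iff, pathGraph_adj, Fin.ext_iff,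
      hJ, hb] at hxy ⊢ <;> omega

theorem isStronglyIntervalGraph_joinGraph_pathGraph_top (hk : 1 ≤ k) :
    IsStronglyIntervalGraph (joinGraph (pathGraph (k + 1)) (⊤ : SimpleGraph (Fin t))) :=
  .of_connected (pathGraph_connected k).joinGraph_left (stronglyIntervalData_cliqueRightEnd hk)
    (range_joinPathTopIntervals ▸ intervalGraphIsoOfInjective _ joinPathTopIntervals_injective
      fun _ _ => joinGraph_pathGraph_top_adj_iff hk)

end Model

theorem join_path_complete_stronglyInterval_general (m t : ℕ) (hm : 3 ≤ m) :
    IsStronglyIntervalGraph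
        (joinGraph (SimpleGraph.pathGraph m) (⊤ : SimpleGraph (Fin t))) ∧
      numMaximalCliques (joinGraph (SimpleGraph.pathGraph m) (⊤ : SimpleGraph (Fin t))) =
        m - 1 := by
  obtain ⟨k, rfl⟩ : ∃ k, m = k + 1 := ⟨m - 1, by omega⟩
  have hk : 1 ≤ k := by omega
  refine ⟨isStronglyIntervalGraph_joinGraph_pathGraph_top hk, ?_⟩
  rw [numMaximalCliques_joinGraph, numMaximalCliques_pathGraph hk, numMaximalCliques_top]
  simp

/-- Let `m ≥ 3` and `t ≥ 1`, and let `G = P_m * K_t` be the join of the path `P_m` on `m`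
vertices and the complete graph `K_t` on `t` vertices.  Then `G` is a strongly interval
graph and `c(G) = m - 1`. -/
theorem join_path_complete_stronglyInterval (m t : ℕ) (hm : 3 ≤ m) (ht : 1 ≤ t) :
    IsStronglyIntervalGraph
        (joinGraph (SimpleGraph.pathGraph m) (⊤ : SimpleGraph (Fin t))) ∧
      numMaximalCliques (joinGraph (SimpleGraph.pathGraph m) (⊤ : SimpleGraph (Fin t))) =
        m - 1 :=
  join_path_complete_stronglyInterval_general m t hm
end
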